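/- arXiv:2405.07205 — 6 statements merged into one kernel-verified Lean document; each statement's English description precedes it below -/
import Mathlib

section
/- Let R be an integral domain and let H := αY − f(Z,T) − h(Z,T) ∈ R[Y,Z,T] be an irreducible polynomial, where α ∈ R is a product of prime elements of R and every prime factor of α divides h in R[Y,Z,T]. If R[Z,T] = R[f][g] is a polynomial ring in one variable over R[f] (i.e. f is a coordinate of R[Z,T] over R), then R[Y,Z,T] is a polynomial ring in two variables over R[H], i.e. R[Y,Z,T] = R[H]^[2]. -/
noncomputable section
open MvPolynomial

/-- The embedding `R[Z,T] → R[Y,Z,T]` sending the two variables `Z, T` to the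
last two variables (variable `0` of `Fin 3` is `Y`). -/
def embZT (R : Type) [CommRing R] : MvPolynomial (Fin 2) R →ₐ[R] MvPolynomial (Fin 3) R :=
  rename Fin.succ

/-!
After the coordinate change of `R[Z,T]` taking `Z` to `f`, and after writing `h = r q` with
`α ∣ r ^ n` (take `r` to be a product of the prime factors of `α`), it remains to show that
`G = αY - Z - r q(Z,T)` is a coordinate of `R[Y,Z,T]`. The iterates `ζₖ` of
`x ↦ -G - r q(x,T)` starting at `0` lie in `R[G,T]` and satisfy
`Z - ζₖ = αY (1 - r tₖ) + r ^ k vₖ`, so `Z - ζₙ = α Y₁` for some `Y₁`. The substitution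
`(Y,Z,T) ↦ (G,Y₁,T)` is surjective: `Z = ζₙ + αY₁`, and `Y` is recovered from `αY` and
`Y (1 - r tₙ)` because `1 - r tₙ` is invertible modulo `r ^ n ∈ αR`. A surjective endomorphism
of a polynomial ring over a domain is an automorphism, by base change to the fraction field,
where it is a surjective endomorphism of a noetherian ring.
-/

theorem RingHom.injective_of_surjective_of_isNoetherianRing {A : Type*} [CommRing A]
    [IsNoetherianRing A] (f : A →+* A) (hf : Function.Surjective f) : Function.Injective f := by
  have hmono : Monotone fun n => RingHom.ker (f ^ n) := by
    refine monotone_nat_of_le_succ fun n a ha => ?_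
    rw [RingHom.mem_ker] at ha ⊢
    rw [pow_succ', RingHom.coe_mul, Function.comp_apply, ha, map_zero]
  obtain ⟨n, hn⟩ := monotone_stabilizes_iff_noetherian.mpr inferInstance ⟨_, hmono⟩
  refine (injective_iff_map_eq_zero f).mpr fun a ha => ?_
  obtain ⟨b, rfl⟩ := (hf.iterate n : Function.Surjective (f ^ n)) a
  have hb : b ∈ RingHom.ker (f ^ (n + 1)) := by
    rwa [RingHom.mem_ker, pow_succ', RingHom.coe_mul, Function.comp_apply]
  have hker : RingHom.ker (f ^ n) = RingHom.ker (f ^ (n + 1)) := hn (n + 1) n.le_succ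
  rw [← hker] at hb
  exact hb

theorem AlgHom.surjective_of_forall_X_mem_range {R B σ : Type*} [CommSemiring R] [Semiring B]
    [Algebra R B] (φ : B →ₐ[R] MvPolynomial σ R) (h : ∀ i, X i ∈ φ.range) :
    Function.Surjective φ := by
  rw [← AlgHom.range_eq_top, eq_top_iff, ← adjoin_range_X, Algebra.adjoin_le_iff]
  rintro _ ⟨i, rfl⟩
  exact h i

namespace MvPolynomial

theorem bijective_of_surjective {R σ : Type*} [CommRing R] [IsDomain R] [Finite σ]
    (e : MvPolynomial σ R →ₐ[R] MvPolynomial σ R) (he : Function.Surjective e) :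
    Function.Bijective e := by
  let K := FractionRing R
  let ι : MvPolynomial σ R →ₐ[R] MvPolynomial σ K := mapAlgHom (Algebra.ofId R K)
  have hι : Function.Injective ι := map_injective _ (IsFractionRing.injective R K)
  let eK : MvPolynomial σ K →ₐ[K] MvPolynomial σ K := aeval fun i => ι (e (X i))
  have hcomm : (eK.restrictScalars R).comp ι = ι.comp e := by
    ext i; simp [eK, ι]
  have hKsurj : Function.Surjective eK := by
    refine eK.surjective_of_forall_X_mem_range fun i => ?_
    obtain ⟨b, hb⟩ := he (X i)
    exact ⟨ι b, by simpa [ι, hb] using DFunLike.congr_fun hcomm b⟩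
  have hKinj := eK.toRingHom.injective_of_surjective_of_isNoetherianRing hKsurj
  refine ⟨fun a b hab => hι (hKinj ?_), he⟩
  have := DFunLike.congr_fun hcomm
  simp only [AlgHom.comp_apply, AlgHom.restrictScalars_apply] at this
  simp [this, hab]

variable {R : Type*} [CommRing R]

theorem aeval_mem {B σ : Type*} [CommRing B] [Algebra R B] {S : Subalgebra R B} {x : σ → B}
    (hx : ∀ i, x i ∈ S) (q : MvPolynomial σ R) : aeval x q ∈ S := by
  have : (aeval x).range ≤ S := by
    rw [aeval_range, Algebra.adjoin_le_iff]
    rintro _ ⟨i, rfl⟩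
    exact hx i
  exact this ⟨q, rfl⟩

theorem sub_dvd_aeval_sub {B : Type*} [CommRing B] [Algebra R B] (q : MvPolynomial (Fin 2) R)
    (u v t : B) : u - v ∣ aeval ![u, t] q - aeval ![v, t] q := by
  have heval : ∀ w : B, (aeval ![Polynomial.X, Polynomial.C t] q).eval w = aeval ![w, t] q := by
    intro w
    rw [← Polynomial.coe_aeval_eq_eval, ← AlgHom.restrictScalars_apply R, comp_aeval_apply]
    congr 1
    ext i; fin_cases i <;> simp
  simpa only [heval] using
    Polynomial.sub_dvd_eval_sub u v (aeval ![Polynomial.X, Polynomial.C t] q)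

theorem exists_mem_aeval_sub_aeval_eq_mul {B : Type*} [CommRing B] [Algebra R B]
    {S : Subalgebra R B} (q : MvPolynomial (Fin 2) R) {u v t : B} (hu : u ∈ S) (hv : v ∈ S)
    (ht : t ∈ S) : ∃ d ∈ S, aeval ![u, t] q - aeval ![v, t] q = (u - v) * d := by
  obtain ⟨d, hd⟩ := sub_dvd_aeval_sub q (⟨u, hu⟩ : S) ⟨v, hv⟩ ⟨t, ht⟩
  refine ⟨d, d.2, ?_⟩
  have hval : ∀ w : S, (aeval ![w, ⟨t, ht⟩] q : B) = aeval ![(w : B), t] q := fun w => by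
    rw [← Subalgebra.coe_val, comp_aeval_apply]
    congr 1
    ext i; fin_cases i <;> simp
  simpa [hval] using congrArg S.val hd

def finSuccMapAlgEquiv {n : ℕ} (ε : MvPolynomial (Fin n) R ≃ₐ[R] MvPolynomial (Fin n) R) :
    MvPolynomial (Fin (n + 1)) R ≃ₐ[R] MvPolynomial (Fin (n + 1)) R :=
  (finSuccEquiv R n).trans ((Polynomial.mapAlgEquiv ε).trans (finSuccEquiv R n).symm)

@[simp]
theorem finSuccMapAlgEquiv_X_zero {n : ℕ}
    (ε : MvPolynomial (Fin n) R ≃ₐ[R] MvPolynomial (Fin n) R) :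
    finSuccMapAlgEquiv ε (X 0) = X 0 := by
  simp [finSuccMapAlgEquiv, finSuccEquiv_X_zero, AlgEquiv.symm_apply_eq]

@[simp]
theorem finSuccMapAlgEquiv_rename_succ {n : ℕ}
    (ε : MvPolynomial (Fin n) R ≃ₐ[R] MvPolynomial (Fin n) R) (q : MvPolynomial (Fin n) R) :
    finSuccMapAlgEquiv ε (rename Fin.succ q) = rename Fin.succ (ε q) := by
  have hC : ∀ q, finSuccEquiv R n (rename Fin.succ q) = Polynomial.C q := fun q =>
    DFunLike.congr_fun (show ((finSuccEquiv R n).toAlgHom.comp (rename Fin.succ)) =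
      Polynomial.CAlgHom by ext i; simp [finSuccEquiv_X_succ]) q
  simp [finSuccMapAlgEquiv, hC, AlgEquiv.symm_apply_eq]

end MvPolynomial

theorem exists_dvd_and_prod_dvd_pow {R M F : Type*} [CommMonoidWithZero R]
    [CommMonoidWithZero M] [FunLike F R M] [MonoidHomClass F R M] (φ : F)
    (hφ : ∀ a b, φ a ∣ φ b → a ∣ b) {x : M} (s : Multiset R) (hs : ∀ p ∈ s, Prime (φ p))
    (hx : ∀ p ∈ s, φ p ∣ x) :
    ∃ r, φ r ∣ x ∧ s.prod ∣ r ^ Multiset.card s := by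
  induction s using Multiset.induction_on with
  | empty => exact ⟨1, by simp, by simp⟩
  | cons p s ih =>
    obtain ⟨r, hrx, hsr⟩ := ih (fun q hq => hs q (Multiset.mem_cons_of_mem hq))
      (fun q hq => hx q (Multiset.mem_cons_of_mem hq))
    rw [Multiset.prod_cons, Multiset.card_cons]
    by_cases hpr : φ p ∣ φ r
    · exact ⟨r, hrx, pow_succ' r _ ▸ mul_dvd_mul (hφ p r hpr) hsr⟩
    · obtain ⟨k, rfl⟩ := hrx
      have hp := Multiset.mem_cons_self p s
      have hpk : φ p ∣ k := ((hs p hp).dvd_or_dvd (hx p hp)).resolve_left hpr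
      refine ⟨p * r, by rw [map_mul, mul_comm (φ p)]; exact mul_dvd_mul_left _ hpk, ?_⟩
      rw [mul_pow]
      exact mul_dvd_mul (dvd_pow_self p s.card.succ_ne_zero)
        (hsr.trans (pow_dvd_pow r s.card.le_succ))

section Iteration

variable {A σ : Type*} [CommRing A] [SetLike σ A] [SubringClass σ A] {S : σ} {p : A → A}

theorem iterate_mem_of_forall_mem (hpS : ∀ u ∈ S, p u ∈ S) {g r : A} (hg : g ∈ S) (hr : r ∈ S)
    (k : ℕ) : (fun x => -g - r * p x)^[k] 0 ∈ S := by
  induction k with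
  | zero => exact zero_mem S
  | succ k ih =>
    rw [Function.iterate_succ_apply']
    exact sub_mem (neg_mem hg) (mul_mem hr (hpS _ ih))

theorem exists_sub_iterate_eq (hpS : ∀ u ∈ S, p u ∈ S)
    (hdiff : ∀ u ∈ S, ∀ v ∈ S, ∃ d ∈ S, p u - p v = (u - v) * d) {α r g y z : A}
    (hgyz : g = α * y - z - r * p z) (hg : g ∈ S) (hr : r ∈ S) (hz : z ∈ S) (k : ℕ) :
    ∃ t ∈ S, ∃ v ∈ S,
      z - (fun x => -g - r * p x)^[k] 0 = α * y * (1 - r * t) + r ^ k * v := by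
  induction k with
  | zero =>
    have hαy : α * y ∈ S := by
      rw [show α * y = g + z + r * p z by rw [hgyz]; ring]
      exact add_mem (add_mem hg hz) (mul_mem hr (hpS z hz))
    exact ⟨0, zero_mem S, z - α * y, sub_mem hz hαy, by simp⟩
  | succ k ih =>
    obtain ⟨t, ht, v, hv, hzx⟩ := ih
    set x := (fun x => -g - r * p x)^[k] 0
    obtain ⟨d, hd, hpd⟩ := hdiff z hz x (iterate_mem_of_forall_mem hpS hg hr k)
    refine ⟨d * (1 - r * t), mul_mem hd (sub_mem (one_mem S) (mul_mem hr ht)),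
      -(d * v), neg_mem (mul_mem hd hv), ?_⟩
    rw [Function.iterate_succ_apply']
    linear_combination hgyz - r * hpd - r * d * hzx

theorem mem_of_mul_eq_sub_iterate (hpS : ∀ u ∈ S, p u ∈ S)
    (hdiff : ∀ u ∈ S, ∀ v ∈ S, ∃ d ∈ S, p u - p v = (u - v) * d) {α r c g y z y₁ : A} {n : ℕ}
    (hα : IsLeftRegular α) (hαS : α ∈ S) (hr : r ∈ S) (hc : c ∈ S) (hrc : r ^ n = α * c)
    (hgyz : g = α * y - z - r * p z) (hg : g ∈ S) (hy₁ : y₁ ∈ S)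
    (hαy₁ : α * y₁ = z - (fun x => -g - r * p x)^[n] 0) : y ∈ S ∧ z ∈ S := by
  have hz : z ∈ S := by
    rw [show z = (fun x => -g - r * p x)^[n] 0 + α * y₁ by rw [hαy₁]; ring]
    exact add_mem (iterate_mem_of_forall_mem hpS hg hr n) (mul_mem hαS hy₁)
  obtain ⟨t, ht, v, hv, hzx⟩ := exists_sub_iterate_eq hpS hdiff hgyz hg hr hz n
  have hαy : α * y ∈ S := by
    rw [show α * y = g + z + r * p z by rw [hgyz]; ring]
    exact add_mem (add_mem hg hz) (mul_mem hr (hpS z hz))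
  have hy₁yt : y₁ = y * (1 - r * t) + c * v :=
    hα (by beta_reduce; rw [hαy₁, hzx, hrc]; ring)
  have hyt : y * (1 - r * t) ∈ S := by
    rw [show y * (1 - r * t) = y₁ - c * v by rw [hy₁yt]; ring]
    exact sub_mem hy₁ (mul_mem hc hv)
  -- `1 - r t` is a unit modulo `r ^ n`, which is a multiple of `α`
  have hy : y = y * (1 - r * t) * ∑ i ∈ Finset.range n, (r * t) ^ i + α * y * (c * t ^ n) := by
    linear_combination (-y) * geom_sum_mul_neg (r * t) n + y * t ^ n * hrc
  refine ⟨?_, hz⟩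
  rw [hy]
  exact add_mem (mul_mem hyt (sum_mem fun i _ => pow_mem (mul_mem hr ht) i))
    (mul_mem hαy (mul_mem hc (pow_mem ht n)))

end Iteration

theorem exists_algEquiv_X_zero_eq_C_mul_X_zero_sub_embZT {R : Type} [CommRing R] [IsDomain R]
    (α r c : R) (n : ℕ) (hα : α ≠ 0) (hrc : r ^ n = α * c) (q : MvPolynomial (Fin 2) R) :
    ∃ e : MvPolynomial (Fin 3) R ≃ₐ[R] MvPolynomial (Fin 3) R,
      e (X 0) = C α * X 0 - embZT R (X 0 + C r * q) := by
  set p : MvPolynomial (Fin 3) R → MvPolynomial (Fin 3) R := fun u => aeval ![u, X 2] q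
  set G := C α * X 0 - embZT R (X 0 + C r * q) with hGdef
  have hG : G = C α * X 0 - X 1 - C r * p (X 1) := by
    have hX : (X ∘ Fin.succ : Fin 2 → MvPolynomial (Fin 3) R) = ![X 1, X 2] := by
      funext i; fin_cases i <;> rfl
    rw [hGdef, embZT, map_add, map_mul, rename_X, rename_C, rename_eq_aeval, hX,
      Fin.succ_zero_eq_one]
    ring
  have hpS (S : Subalgebra R (MvPolynomial (Fin 3) R)) (hT : X 2 ∈ S) : ∀ u ∈ S, p u ∈ S :=
    fun u hu => aeval_mem (fun i => by fin_cases i <;> assumption) q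
  have hdiff (S : Subalgebra R (MvPolynomial (Fin 3) R)) (hT : X 2 ∈ S) :
      ∀ u ∈ S, ∀ v ∈ S, ∃ d ∈ S, p u - p v = (u - v) * d :=
    fun u hu v hv => exists_mem_aeval_sub_aeval_eq_mul q hu hv hT
  have hC (S : Subalgebra R (MvPolynomial (Fin 3) R)) (a : R) : C a ∈ S := S.algebraMap_mem a
  have hCrc : C r ^ n = C α * (C c : MvPolynomial (Fin 3) R) := by rw [← map_pow, hrc, map_mul]
  obtain ⟨t, -, v, -, hsub⟩ := exists_sub_iterate_eq (S := (⊤ : Subalgebra R _))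
    (hpS ⊤ trivial) (hdiff ⊤ trivial) hG trivial trivial trivial n
  set Y₁ := X 0 * (1 - C r * t) + C c * v
  have hY₁ : C α * Y₁ = X 1 - (fun x => -G - C r * p x)^[n] 0 := by
    rw [hsub, hCrc]; ring
  set e₀ : MvPolynomial (Fin 3) R →ₐ[R] MvPolynomial (Fin 3) R := aeval ![G, Y₁, X 2]
  have hT : X 2 ∈ e₀.range := ⟨X 2, by simp [e₀]⟩
  obtain ⟨hY, hZ⟩ := mem_of_mul_eq_sub_iterate (hpS _ hT) (hdiff _ hT)
    (IsRegular.of_ne_zero (C_ne_zero.mpr hα)).left (hC _ α) (hC _ r) (hC _ c) hCrc hG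
    ⟨X 0, by simp [e₀]⟩ ⟨X 1, by simp [e₀]⟩ hY₁
  have hsurj : Function.Surjective e₀ :=
    e₀.surjective_of_forall_X_mem_range fun i => by fin_cases i <;> assumption
  exact ⟨AlgEquiv.ofBijective e₀ (bijective_of_surjective e₀ hsurj), by simp [e₀]⟩

theorem stmt0_general (R : Type) [CommRing R] [IsDomain R]
    (α : R) (f h : MvPolynomial (Fin 2) R)
    (hα : ∃ s : Multiset R, (∀ p ∈ s, Prime p) ∧ s.prod = α)
    (hdiv : ∀ p : R, Prime p → p ∣ α → (MvPolynomial.C p : MvPolynomial (Fin 2) R) ∣ h)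
    (H : MvPolynomial (Fin 3) R)
    (hH : H = MvPolynomial.C α * MvPolynomial.X 0 - embZT R f - embZT R h)
    (hcoord : ∃ e : MvPolynomial (Fin 2) R ≃ₐ[R] MvPolynomial (Fin 2) R,
        e (MvPolynomial.X 0) = f) :
    ∃ e : MvPolynomial (Fin 3) R ≃ₐ[R] MvPolynomial (Fin 3) R,
        e (MvPolynomial.X 0) = H := by
  obtain ⟨s, hs, rfl⟩ := hα
  obtain ⟨ε, rfl⟩ := hcoord
  obtain ⟨r, ⟨k, rfl⟩, c, hc⟩ := exists_dvd_and_prod_dvd_pow (C : R →+* MvPolynomial (Fin 2) R)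
    (fun a b hab => by simpa using map_dvd constantCoeff hab) s
    (fun p hp => (prime_C_iff (Fin 2)).mpr (hs p hp))
    (fun p hp => hdiv p (hs p hp) (Multiset.dvd_prod hp))
  obtain ⟨e, he⟩ := exists_algEquiv_X_zero_eq_C_mul_X_zero_sub_embZT s.prod r c _
    (Multiset.prod_ne_zero fun h0 => (hs 0 h0).ne_zero rfl) hc (ε.symm k)
  refine ⟨e.trans (finSuccMapAlgEquiv ε), ?_⟩
  have hC₂ : ∀ a, ε (C a) = C a := ε.commutes
  have hC₃ : ∀ a, finSuccMapAlgEquiv ε (C a) = C a := (finSuccMapAlgEquiv ε).commutes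
  rw [AlgEquiv.trans_apply, he, hH, embZT]
  simp only [map_sub, map_add, map_mul, hC₂, hC₃, finSuccMapAlgEquiv_X_zero,
    finSuccMapAlgEquiv_rename_succ, AlgEquiv.apply_symm_apply]
  ring

/-- Lemma 2.6, Russell–Sathaye application.
If `H = αY - f(Z,T) - h(Z,T)` is irreducible, `α` is a product of primes of `R`,
every prime factor of `α` divides `h`, and `f` is a coordinate of `R[Z,T]` over `R`,
then `R[Y,Z,T] = R[H]^[2]`, i.e. `H` is a coordinate of `R[Y,Z,T]` over `R`. -/
theorem stmt0 (R : Type) [CommRing R] [IsDomain R]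
    (α : R) (f h : MvPolynomial (Fin 2) R)
    (hα : ∃ s : Multiset R, (∀ p ∈ s, Prime p) ∧ s.prod = α)
    (hdiv : ∀ p : R, Prime p → p ∣ α → (MvPolynomial.C p : MvPolynomial (Fin 2) R) ∣ h)
    (H : MvPolynomial (Fin 3) R)
    (hH : H = MvPolynomial.C α * MvPolynomial.X 0 - embZT R f - embZT R h)
    (hirr : Irreducible H)
    (hcoord : ∃ e : MvPolynomial (Fin 2) R ≃ₐ[R] MvPolynomial (Fin 2) R,
        e (MvPolynomial.X 0) = f) :
    ∃ e : MvPolynomial (Fin 3) R ≃ₐ[R] MvPolynomial (Fin 3) R,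
        e (MvPolynomial.X 0) = H :=
  stmt0_general R α f h hα hdiv H hH hcoord
end
end

section
/- Let R be a UFD, u, v ∈ R \ {0}, C = R[Y]/(uY − v) an integral domain, and let u_j be a prime factor of u in R. Then C/u_jC is isomorphic as an R-algebra to a polynomial ring in one variable over R/(u_j, v)R. Consequently, u_j is a prime element of C if and only if (u_j, v)R is a prime ideal of R, and u_j is a unit of C if and only if (u_j, v)R = R. -/
/-!
Since `u_j ∣ u`, the ideal `(uY - v, u_j)` of `R[Y]` is generated by `u_j` and `v`, i.e. it is the
extension of `(u_j, v)R`. Hence `C/u_jC ≅ R[Y]/(u_j, v)R[Y] ≅ (R/(u_j, v)R)[Y]`.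
A polynomial ring is a domain (resp. zero) exactly when its coefficient ring is, which gives
the criteria for `u_j` to be prime (it is nonzero in `C` because `uY - v` has degree one)
or a unit in `C`.
-/

noncomputable section

/-- The simple birational extension `C = R[Y]/(uY - v)` of `R`. -/
def birat (R : Type) [CommRing R] (u v : R) : Type :=
  Polynomial R ⧸ Ideal.span {Polynomial.C u * Polynomial.X - Polynomial.C v}

instance (R : Type) [CommRing R] (u v : R) : CommRing (birat R u v) :=
  inferInstanceAs (CommRing (_ ⧸ _))

instance (R : Type) [CommRing R] (u v : R) : Algebra R (birat R u v) :=
  inferInstanceAs (Algebra R (_ ⧸ _))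

/-- The image of an element of `R[Y]` in `C = R[Y]/(uY - v)`. -/
def biratMk (R : Type) [CommRing R] (u v : R) (a : Polynomial R) : birat R u v :=
  Ideal.Quotient.mk _ a

open Polynomial

namespace Ideal

variable {A B : Type*} [CommRing A] [CommRing B]

theorem span_singleton_mul_sub_sup_span_singleton {a b : A} (c x : A) (hab : a ∣ b) :
    span {b * x - c} ⊔ span {a} = span {a, c} := by
  obtain ⟨w, rfl⟩ := hab
  have hgen : a * w * x - c = -c + w * x * a := by ring
  rw [sup_comm, ← span_insert, hgen, span_pair_add_mul_left, span_insert, span_singleton_neg,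
    ← span_insert]

theorem span_singleton_quotient_mk_eq_map (R : Type*) [CommSemiring R] [Algebra R A] (I : Ideal A)
    (x : A) : span {Quotient.mk I x} = (span {x}).map (Quotient.mkₐ R I) := by
  rw [map_span, Set.image_singleton]
  rfl

def polynomialQuotientAlgEquiv (I : Ideal A) :
    (A ⧸ I)[X] ≃ₐ[A] A[X] ⧸ I.map (C : A →+* A[X]) :=
  AlgEquiv.ofRingEquiv (f := I.polynomialQuotientEquivQuotientPolynomial) fun r => by
    apply I.polynomialQuotientEquivQuotientPolynomial.symm.injective
    rw [RingEquiv.symm_apply_apply]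
    exact ((polynomialQuotientEquivQuotientPolynomial_symm_mk I (C r)).trans (map_C _)).symm

theorem isPrime_iff_of_ringEquiv_polynomial {I : Ideal A} {J : Ideal B}
    (e : A ⧸ I ≃+* (B ⧸ J)[X]) : I.IsPrime ↔ J.IsPrime := by
  rw [← Quotient.isDomain_iff_prime, ← Quotient.isDomain_iff_prime, e.toMulEquiv.isDomain_iff,
    Polynomial.isDomain_iff, and_iff_left (by infer_instance)]

theorem eq_top_iff_of_ringEquiv_polynomial {I : Ideal A} {J : Ideal B}
    (e : A ⧸ I ≃+* (B ⧸ J)[X]) : I = ⊤ ↔ J = ⊤ := by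
  rw [← Quotient.subsingleton_iff, ← Quotient.subsingleton_iff, e.toEquiv.subsingleton_congr,
    subsingleton_iff_subsingleton]

end Ideal

section BirationalExtension

variable {R : Type} [CommRing R]

open Ideal

theorem sup_span_C_eq_map_span_pair {u v uj : R} (hdvd : uj ∣ u) :
    span {C u * X - C v} ⊔ span {C uj} = (span {uj, v}).map (C : R →+* R[X]) := by
  rw [span_singleton_mul_sub_sup_span_singleton _ _ (map_dvd C hdvd), map_span,
    Set.image_pair]

def biratQuotSpanEquiv (u v uj : R) (hdvd : uj ∣ u) :
    (birat R u v ⧸ span {biratMk R u v (C uj)}) ≃ₐ[R] (R ⧸ span {uj, v})[X] :=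
  (quotientEquivAlgOfEq R <|
      span_singleton_quotient_mk_eq_map R (span {C u * X - C v}) (C uj)).trans <|
    (DoubleQuot.quotQuotEquivQuotSupₐ R _ _).trans <|
      (quotientEquivAlgOfEq R (sup_span_C_eq_map_span_pair hdvd)).trans
        (polynomialQuotientAlgEquiv _).symm

theorem biratMk_C_ne_zero [IsDomain R] {u a : R} (v : R) (hu : u ≠ 0) (ha : a ≠ 0) :
    biratMk R u v (C a) ≠ 0 := by
  intro h
  have hlin : (C u * X - C v).natDegree = 1 := by
    rw [sub_eq_add_neg, ← map_neg]
    exact natDegree_linear hu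
  have hdvd : C u * X - C v ∣ C a := mem_span_singleton.mp (Quotient.eq_zero_iff_mem.mp h)
  have := natDegree_le_of_dvd hdvd (C_ne_zero.mpr ha)
  rw [hlin, natDegree_C] at this
  omega

end BirationalExtension

theorem stmt2_general (R : Type) [CommRing R] [IsDomain R]
    (u v : R) (hu : u ≠ 0)
    (uj : R) (hprime : Prime uj) (hdvd : uj ∣ u) :
    Nonempty ((birat R u v ⧸ Ideal.span {biratMk R u v (Polynomial.C uj)})
        ≃ₐ[R] Polynomial (R ⧸ Ideal.span {uj, v})) ∧
    (Prime (biratMk R u v (Polynomial.C uj)) ↔ (Ideal.span {uj, v}).IsPrime) ∧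
    (IsUnit (biratMk R u v (Polynomial.C uj)) ↔ Ideal.span {uj, v} = ⊤) := by
  let e := biratQuotSpanEquiv u v uj hdvd
  refine ⟨⟨e⟩, ?_, ?_⟩
  · rw [← Ideal.span_singleton_prime (biratMk_C_ne_zero v hu hprime.ne_zero),
      Ideal.isPrime_iff_of_ringEquiv_polynomial e.toRingEquiv]
  · rw [← Ideal.span_singleton_eq_top, Ideal.eq_top_iff_of_ringEquiv_polynomial e.toRingEquiv]

/-- key isomorphism inside Proposition 3.4.
`C/u_jC ≅ (R/(u_j,v))^[1]`; consequently `u_j` is prime in `C` iff `(u_j,v)R` is prime,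
and `u_j` is a unit of `C` iff `(u_j,v)R = R`. -/
theorem stmt2 (R : Type) [CommRing R] [IsDomain R] [UniqueFactorizationMonoid R]
    (u v : R) (hu : u ≠ 0) (hv : v ≠ 0)
    [IsDomain (birat R u v)]
    (uj : R) (hprime : Prime uj) (hdvd : uj ∣ u) :
    Nonempty ((birat R u v ⧸ Ideal.span {biratMk R u v (Polynomial.C uj)})
        ≃ₐ[R] Polynomial (R ⧸ Ideal.span {uj, v})) ∧
    (Prime (biratMk R u v (Polynomial.C uj)) ↔ (Ideal.span {uj, v}).IsPrime) ∧
    (IsUnit (biratMk R u v (Polynomial.C uj)) ↔ Ideal.span {uj, v} = ⊤) :=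
  stmt2_general R u v hu uj hprime hdvd
end
end

section
/- Let k be a field and let A = k[X_1,…,X_m,Y,Z,T]/(α(X_1,…,X_m)Y − f(Z,T) − h(X_1,…,X_m,Z,T)) be an integral domain, where f(Z,T) ≠ 0 and every prime factor of α in k[X_1,…,X_m] divides h in k[X_1,…,X_m,Z,T]. Then A is a flat algebra over E = k[x_1,…,x_m], the subring generated by the images of X_1,…,X_m. -/
/-! Over `R = k[X_1,…,X_m]`, view `H` as a polynomial in `Y, Z, T`. Its coefficients generate
the unit ideal of `R`: a prime of `R` not containing `α` misses the coefficient of `Y`, and a prime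
containing `α` contains a prime factor of `α`, hence every coefficient of `h`, so it misses the
coefficient `-f_d - h_d` at a monomial where `f_d ∈ k` is nonzero. By McCoy's theorem such a
polynomial stays a nonzerodivisor modulo every extended ideal `I·R[Y,Z,T]`, i.e.
`(H) ∩ I·R[Y,Z,T] = I·(H)`, and this intersection property makes `R[Y,Z,T]/(H)` flat over
`R`. -/

noncomputable section
open MvPolynomial

/-- The polynomial `H = α(X_1,…,X_m)·Y - f(Z,T) - h(X_1,…,X_m,Z,T)` inside
`k[X_1,…,X_m][Y,Z,T]` (variable `0` of `Fin 3` is `Y`, variables `1, 2` are `Z, T`). -/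
def HH (k : Type) [Field k] (m : ℕ) (α : MvPolynomial (Fin m) k)
    (f : MvPolynomial (Fin 2) k) (h : MvPolynomial (Fin 2) (MvPolynomial (Fin m) k)) :
    MvPolynomial (Fin 3) (MvPolynomial (Fin m) k) :=
  MvPolynomial.C α * MvPolynomial.X 0
    - rename Fin.succ (MvPolynomial.map (algebraMap k (MvPolynomial (Fin m) k)) f)
    - rename Fin.succ h

/-- The affine domain `A = k[X_1,…,X_m,Y,Z,T]/(αY - f(Z,T) - h)`. -/
def Aring (k : Type) [Field k] (m : ℕ) (α : MvPolynomial (Fin m) k)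
    (f : MvPolynomial (Fin 2) k) (h : MvPolynomial (Fin 2) (MvPolynomial (Fin m) k)) : Type :=
  MvPolynomial (Fin 3) (MvPolynomial (Fin m) k) ⧸ Ideal.span {HH k m α f h}

instance (k : Type) [Field k] (m : ℕ) (α : MvPolynomial (Fin m) k)
    (f : MvPolynomial (Fin 2) k) (h : MvPolynomial (Fin 2) (MvPolynomial (Fin m) k)) :
    CommRing (Aring k m α f h) := inferInstanceAs (CommRing (_ ⧸ _))

instance (k : Type) [Field k] (m : ℕ) (α : MvPolynomial (Fin m) k)
    (f : MvPolynomial (Fin 2) k) (h : MvPolynomial (Fin 2) (MvPolynomial (Fin m) k)) :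
    Algebra (MvPolynomial (Fin m) k) (Aring k m α f h) :=
  inferInstanceAs (Algebra _ (_ ⧸ _))

instance (k : Type) [Field k] (m : ℕ) (α : MvPolynomial (Fin m) k)
    (f : MvPolynomial (Fin 2) k) (h : MvPolynomial (Fin 2) (MvPolynomial (Fin m) k)) :
    Algebra k (Aring k m α f h) := inferInstanceAs (Algebra _ (_ ⧸ _))

theorem Nat.ofDigits_ofFn (b : ℕ) : ∀ {n : ℕ} (d : Fin n → ℕ),
    Nat.ofDigits b (List.ofFn d) = ∑ i : Fin n, b ^ (i : ℕ) * d i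
  | 0, _ => by simp
  | n + 1, d => by
    rw [List.ofFn_succ, Nat.ofDigits_cons, Nat.ofDigits_ofFn b, Fin.sum_univ_succ, Finset.mul_sum]
    simp [pow_succ, mul_comm, mul_left_comm]

theorem Finsupp.mapDomain_succ_ne_single_zero {M : Type*} [AddCommMonoid M] {n : ℕ}
    (u : Fin n →₀ M) {c : M} (hc : c ≠ 0) :
    Finsupp.mapDomain Fin.succ u ≠ Finsupp.single 0 c :=
  fun hu => hc <| by
    simpa [hu] using Finsupp.mapDomain_of_notMem_range (f := Fin.succ) u 0 (by simp)

theorem Ideal.IsPrime.exists_prime_dvd_mem {R : Type*} [CommSemiring R]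
    [UniqueFactorizationMonoid R] {P : Ideal R} (hP : P.IsPrime) {a : R} (ha : a ≠ 0)
    (haP : a ∈ P) : ∃ t ∈ P, Prime t ∧ t ∣ a := by
  obtain ⟨u, hu⟩ := UniqueFactorizationMonoid.factors_prod ha
  rw [← hu, Ideal.mul_unit_mem_iff_mem _ u.isUnit] at haP
  obtain ⟨t, ht, htP⟩ := (hP.multiset_prod_mem_iff_exists_mem _).mp haP
  exact ⟨t, htP, UniqueFactorizationMonoid.prime_of_factor t ht,
    UniqueFactorizationMonoid.dvd_of_mem_factors ht⟩

theorem Ideal.lid_comp_rTensor_subtype_comp_lTensor {R M N : Type*} [CommRing R]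
    [AddCommGroup M] [AddCommGroup N] [Module R M] [Module R N] (I : Ideal R) (f : M →ₗ[R] N) :
    ((TensorProduct.lid R N).comp (I.subtype.rTensor N)) ∘ₗ f.lTensor I =
      f ∘ₗ ((TensorProduct.lid R M).comp (I.subtype.rTensor M)) := by
  ext
  simp

/-- Converse of `LinearMap.ker_inf_smul_top_eq_smul_of_flat`. An element of `I ⊗ N` that
vanishes in `N` lifts to `y ∈ I ⊗ M` whose image in `M` lies in
`ker f ⊓ I • ⊤ ≤ I • ker f`; as `I ⊗ M → M` is injective, `y` comes from `I ⊗ ker f` and so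
maps to `0`. -/
theorem Module.Flat.of_ker_inf_smul_top_le {R M N : Type*} [CommRing R] [AddCommGroup M]
    [AddCommGroup N] [Module R M] [Module R N] [Module.Flat R M] {f : M →ₗ[R] N}
    (hf : Function.Surjective f)
    (h : ∀ I : Ideal R, LinearMap.ker f ⊓ I • ⊤ ≤ I • LinearMap.ker f) :
    Module.Flat R N := by
  refine Module.Flat.iff_rTensor_injective'.mpr fun I => (injective_iff_map_eq_zero _).mpr ?_
  intro x hx
  obtain ⟨y, rfl⟩ := LinearMap.lTensor_surjective I hf x
  set K := LinearMap.ker f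
  have hιM : Function.Injective ((TensorProduct.lid R M).comp (I.subtype.rTensor M)) := by
    simpa using Module.Flat.iff_rTensor_injective'.mp ‹_› I
  have hfy : f (((TensorProduct.lid R M).comp (I.subtype.rTensor M)) y) = 0 := by
    rw [← LinearMap.comp_apply, ← I.lid_comp_rTensor_subtype_comp_lTensor f,
      LinearMap.comp_apply, LinearMap.comp_apply, hx, map_zero]
  have hyK : ((TensorProduct.lid R M).comp (I.subtype.rTensor M)) y ∈ I • K :=
    h I ⟨hfy, I.subtype_rTensor_range M ▸ ⟨y, rfl⟩⟩
  obtain ⟨z, hz⟩ :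
      ∃ z, ((TensorProduct.lid R K).comp (I.subtype.rTensor K)) z = ⟨_, hfy⟩ := by
    have hyK' := (Submodule.mem_smul_top_iff I K ⟨_, hfy⟩).mpr hyK
    rwa [← I.subtype_rTensor_range K] at hyK'
  have hyz : y = K.subtype.lTensor I z := hιM <| by
    rw [← LinearMap.comp_apply _ (K.subtype.lTensor I), I.lid_comp_rTensor_subtype_comp_lTensor,
      LinearMap.comp_apply K.subtype, hz, Submodule.subtype_apply]
  rw [hyz, ← LinearMap.lTensor_comp_apply, show f ∘ₗ K.subtype = 0 by ext; simp [K],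
    LinearMap.lTensor_zero, LinearMap.zero_apply]

namespace MvPolynomial

variable {R : Type*} [CommRing R] {n : ℕ}

def kroneckerSubst (D : ℕ) : MvPolynomial (Fin n) R →ₐ[R] Polynomial R :=
  aeval fun i => Polynomial.X ^ D ^ (i : ℕ)

theorem kroneckerSubst_monomial (D : ℕ) (v : Fin n →₀ ℕ) (c : R) :
    kroneckerSubst D (monomial v c) =
      Polynomial.C c * Polynomial.X ^ Nat.ofDigits D (List.ofFn v) := by
  rw [kroneckerSubst, aeval_monomial, Finsupp.prod_fintype _ _ fun _ => pow_zero _,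
    Nat.ofDigits_ofFn, ← Finset.prod_pow_eq_pow_sum, Polynomial.algebraMap_eq]
  simp_rw [← pow_mul]

theorem coeff_kroneckerSubst {D : ℕ} (hD : 1 < D) {p : MvPolynomial (Fin n) R}
    (hp : ∀ v ∈ p.support, ∀ i, v i < D) {d : Fin n →₀ ℕ} (hd : ∀ i, d i < D) :
    (kroneckerSubst D p).coeff (Nat.ofDigits D (List.ofFn d)) = coeff d p := by
  have hinj : ∀ v ∈ p.support,
      Nat.ofDigits D (List.ofFn v) = Nat.ofDigits D (List.ofFn d) → v = d :=
    fun v hv hvd => DFunLike.coe_injective <| List.ofFn_injective <|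
      Nat.ofDigits_inj_of_len_eq hD (by simp) (by simpa using hp v hv) (by simpa using hd) hvd
  conv_lhs => rw [p.as_sum, map_sum]
  simp_rw [kroneckerSubst_monomial, Polynomial.finsetSum_coeff, Polynomial.coeff_C_mul_X_pow]
  rw [Finset.sum_congr rfl fun v hv => if_congr ⟨fun h => hinj v hv h.symm, fun h => h ▸ rfl⟩
    rfl rfl, Finset.sum_ite_eq']
  split_ifs with hdp
  · rfl
  · exact (notMem_support_iff.mp hdp).symm

theorem eq_zero_of_kroneckerSubst_eq_zero {D : ℕ} (hD : 1 < D) {p : MvPolynomial (Fin n) R}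
    (hp : ∀ v ∈ p.support, ∀ i, v i < D) (h : kroneckerSubst D p = 0) : p = 0 := by
  ext d
  by_cases hd : d ∈ p.support
  · rw [← coeff_kroneckerSubst hD hp (hp d hd), h, Polynomial.coeff_zero, coeff_zero]
  · exact notMem_support_iff.mp hd

/-- McCoy's theorem in finitely many variables, reduced to `Polynomial.notMem_nonZeroDivisors_iff`
by a Kronecker substitution, which is injective on polynomials of small degree. -/
theorem exists_smul_eq_zero_of_mul_eq_zero {G q : MvPolynomial (Fin n) R} (h : G * q = 0)
    (hq : q ≠ 0) : ∃ a : R, a ≠ 0 ∧ a • G = 0 := by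
  set D := G.totalDegree + q.totalDegree + 2
  have hD : 1 < D := by omega
  have bound {p : MvPolynomial (Fin n) R} (hpD : p.totalDegree < D) :
      ∀ v ∈ p.support, ∀ i, v i < D := fun v hv i =>
    ((monomial_le_degreeOf i hv).trans (degreeOf_le_totalDegree p i)).trans_lt hpD
  have hG : kroneckerSubst D G ∉ nonZeroDivisors (Polynomial R) := fun hG =>
    hq <| eq_zero_of_kroneckerSubst_eq_zero hD (bound (by omega)) <|
      mem_nonZeroDivisors_iff_right.mp hG _ (by rw [mul_comm, ← map_mul, h, map_zero])
  obtain ⟨a, ha, haG⟩ := Polynomial.notMem_nonZeroDivisors_iff.mp hG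
  refine ⟨a, ha, eq_zero_of_kroneckerSubst_eq_zero hD (fun v hv => ?_) (by rw [map_smul, haG])⟩
  exact bound (by omega) v (support_smul hv)

theorem mem_map_C_of_mul_mem {G q : MvPolynomial (Fin n) R}
    (hG : Ideal.span (G.coeffs : Set R) = ⊤) {I : Ideal R} (h : G * q ∈ I.map C) :
    q ∈ I.map C := by
  rw [← Ideal.mk_ker (I := I), ← ker_map, RingHom.mem_ker] at h ⊢
  by_contra hq
  obtain ⟨a, ha, haG⟩ := exists_smul_eq_zero_of_mul_eq_zero (by rwa [map_mul] at h) hq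
  obtain ⟨c, rfl⟩ := Ideal.Quotient.mk_surjective a
  have hcolon : Ideal.span (G.coeffs : Set R) ≤ I.colon (Ideal.span {c}) := by
    refine Ideal.span_le.mpr fun x hx => ?_
    obtain ⟨d, -, rfl⟩ := mem_coeffs_iff.mp hx
    have := congrArg (coeff d) haG
    rw [coeff_smul, coeff_map, coeff_zero, smul_eq_mul, ← map_mul,
      Ideal.Quotient.eq_zero_iff_mem, mul_comm] at this
    exact Ideal.mem_colon_span_singleton.mpr this
  have hc := hcolon (hG ▸ Submodule.mem_top : (1 : R) ∈ Ideal.span (G.coeffs : Set R))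
  rw [Ideal.mem_colon_span_singleton, one_mul] at hc
  exact ha (Ideal.Quotient.eq_zero_iff_mem.mpr hc)

theorem flat_quotient_span_singleton {G : MvPolynomial (Fin n) R}
    (hG : Ideal.span (G.coeffs : Set R) = ⊤) :
    Module.Flat R (MvPolynomial (Fin n) R ⧸ Ideal.span {G}) := by
  refine Module.Flat.of_ker_inf_smul_top_le
    (f := (Ideal.Quotient.mkₐ R (Ideal.span {G})).toLinearMap) Ideal.Quotient.mk_surjective
    fun I => ?_
  rintro x ⟨hxG, hxI⟩
  obtain ⟨q, rfl⟩ := Ideal.mem_span_singleton'.mp (Ideal.Quotient.eq_zero_iff_mem.mp hxG)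
  rw [Ideal.smul_top_eq_map, algebraMap_eq] at hxI
  replace hxI : G * q ∈ I.map C := mul_comm q G ▸ hxI
  have hq : q ∈ I • (⊤ : Submodule R (MvPolynomial (Fin n) R)) := by
    rw [Ideal.smul_top_eq_map, algebraMap_eq]
    exact mem_map_C_of_mul_mem hG hxI
  have hqG := Submodule.mem_map_of_mem (f := LinearMap.mulRight R G) hq
  rw [Submodule.map_smul''] at hqG
  refine Submodule.smul_mono le_rfl ?_ hqG
  rintro _ ⟨p, -, rfl⟩
  exact Ideal.Quotient.eq_zero_iff_mem.mpr
    (Ideal.mul_mem_left _ _ (Ideal.mem_span_singleton_self G))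

end MvPolynomial

section HH

variable {k : Type} [Field k] {m : ℕ} {α : MvPolynomial (Fin m) k} {f : MvPolynomial (Fin 2) k}
  {h : MvPolynomial (Fin 2) (MvPolynomial (Fin m) k)}

theorem coeff_single_zero_HH : coeff (Finsupp.single 0 1) (HH k m α f h) = α := by
  have hrename (t : MvPolynomial (Fin 2) (MvPolynomial (Fin m) k)) :
      coeff (Finsupp.single 0 1) (rename Fin.succ t) = 0 :=
    coeff_rename_eq_zero _ _ _ fun u hu =>
      absurd hu (Finsupp.mapDomain_succ_ne_single_zero u one_ne_zero)
  simp [HH, coeff_C_mul, hrename]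

theorem coeff_mapDomain_succ_HH (d : Fin 2 →₀ ℕ) :
    coeff (Finsupp.mapDomain Fin.succ d) (HH k m α f h) = -C (coeff d f) - coeff d h := by
  have hY := (Finsupp.mapDomain_succ_ne_single_zero d one_ne_zero).symm
  simp [HH, coeff_C_mul, coeff_X, hY, coeff_map, coeff_rename_mapDomain _ (Fin.succ_injective 2)]

/-- If `α ∈ P`, some prime factor of `α` lies in `P` and divides `h`, so the coefficient of `HH`
at a monomial of `f` is a nonzero scalar modulo `P`. -/
theorem exists_coeff_HH_notMem (hf : f ≠ 0) (hα : α ≠ 0)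
    (hdiv : ∀ p : MvPolynomial (Fin m) k, Prime p → p ∣ α → C p ∣ h)
    {P : Ideal (MvPolynomial (Fin m) k)} (hP : P.IsPrime) :
    ∃ d, coeff d (HH k m α f h) ∉ P := by
  by_cases hαP : α ∉ P
  · exact ⟨Finsupp.single 0 1, by rwa [coeff_single_zero_HH]⟩
  obtain ⟨t, htP, ht, htα⟩ := hP.exists_prime_dvd_mem hα (not_not.mp hαP)
  obtain ⟨h', rfl⟩ := hdiv t ht htα
  obtain ⟨d, hd⟩ := ne_zero_iff.mp hf
  refine ⟨Finsupp.mapDomain Fin.succ d, fun hmem => hP.ne_top ?_⟩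
  rw [coeff_mapDomain_succ_HH, coeff_C_mul] at hmem
  have hfd : C (coeff d f) ∈ P := by
    simpa using P.neg_mem (P.add_mem hmem (P.mul_mem_right (coeff d h') htP))
  exact Ideal.eq_top_of_isUnit_mem _ hfd ((isUnit_iff_ne_zero.mpr hd).map _)

theorem span_coeffs_HH_eq_top (hf : f ≠ 0) (hα : α ≠ 0)
    (hdiv : ∀ p : MvPolynomial (Fin m) k, Prime p → p ∣ α → C p ∣ h) :
    Ideal.span ((HH k m α f h).coeffs : Set (MvPolynomial (Fin m) k)) = ⊤ := by
  by_contra hne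
  obtain ⟨P, hP, hle⟩ := Ideal.exists_le_maximal _ hne
  obtain ⟨d, hd⟩ := exists_coeff_HH_notMem hf hα hdiv hP.isPrime
  by_cases hd0 : coeff d (HH k m α f h) = 0
  · exact hd (hd0 ▸ P.zero_mem)
  · exact hd (hle (Ideal.subset_span (coeff_mem_coeffs d hd0)))

end HH

theorem stmt3_general (k : Type) [Field k] (m : ℕ) (α : MvPolynomial (Fin m) k)
    (f : MvPolynomial (Fin 2) k) (h : MvPolynomial (Fin 2) (MvPolynomial (Fin m) k))
    (hf : f ≠ 0)
    (hα : α ∉ Set.range (algebraMap k (MvPolynomial (Fin m) k)))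
    (hdiv : ∀ p : MvPolynomial (Fin m) k, Prime p → p ∣ α → MvPolynomial.C p ∣ h) :
    Module.Flat (MvPolynomial (Fin m) k) (Aring k m α f h) :=
  flat_quotient_span_singleton <|
    span_coeffs_HH_eq_top hf (fun hα0 => hα ⟨0, by rw [map_zero, hα0]⟩) hdiv

/-- Lemma 3.1. `A` is a flat algebra over `E = k[x_1,…,x_m]`. -/
theorem stmt3 (k : Type) [Field k] (m : ℕ) (α : MvPolynomial (Fin m) k)
    (f : MvPolynomial (Fin 2) k) (h : MvPolynomial (Fin 2) (MvPolynomial (Fin m) k))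
    (hf : f ≠ 0)
    (hα : α ∉ Set.range (algebraMap k (MvPolynomial (Fin m) k)))
    (hdiv : ∀ p : MvPolynomial (Fin m) k, Prime p → p ∣ α → MvPolynomial.C p ∣ h)
    [IsDomain (Aring k m α f h)] :
    Module.Flat (MvPolynomial (Fin m) k) (Aring k m α f h) :=
  stmt3_general k m α f h hf hα hdiv
end
end

section
/- Let k be a field and A = k[X_1,…,X_m,Y,Z,T]/(αY − f(Z,T) − h) an integral domain with f(Z,T) ≠ 0, α ∉ k, and every prime factor of α dividing h. If A is a UFD, then f(Z,T) is either an irreducible element of k[Z,T] or a unit (an element of k^*). -/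
noncomputable section
open MvPolynomial

/-!
Let `p` be a prime factor of `α`. Since `p` divides both `α` and `h`, modulo `p` the defining
relation reads `f = 0`, so `A / pA ≅ (k[X] / p)[Y, Z, T] / (f)`. As `f` is not constant, this
makes `k[X] / q → A / qA` injective for every prime `q ∣ α`; together with
`A[1/α] = k[X][1/α][Z, T]` it follows that the only divisors of `p` in `A` come from `k[X]`,
so `p` is irreducible, hence prime in the UFD `A`. Now `f = p (α' Y - h')` in `A`, so for a
factorisation `f = g₁ g₂` the prime `p` divides, say, `g₁` in `A`; reducing modulo `p` gives
`f ∣ g₁` in `(k[X] / p)[Y, Z, T]`, which forces `g₂` to be a unit.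
-/

theorem MvPolynomial.isUnit_of_rename_map_dvd_C {k D σ τ : Type*} [Field k] [CommRing D]
    [IsDomain D] (φ : k →+* D) {e : σ → τ} (he : Function.Injective e) {g : MvPolynomial σ k}
    {d : D} (hd : d ≠ 0) (hdvd : rename e (map φ g) ∣ C d) : IsUnit g := by
  obtain ⟨b, hbd, hb⟩ := (dvd_C_iff_exists hd).mp hdvd
  have hdeg : g.degrees = 0 := by
    have := congrArg degrees hb
    rwa [degrees_rename_of_injective he, degrees_map_of_injective _ φ.injective, degrees_C,
      Multiset.map_eq_zero] at this
  have hg : g = C (g.coeff 0) := totalDegree_eq_zero_iff_eq_C.mp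
    (Nat.eq_zero_of_le_zero (by simpa [hdeg] using totalDegree_le_degrees_card g))
  rw [hg, map_C, rename_C, C_inj] at hb
  rw [hg]
  refine (IsUnit.mk0 _ fun h0 => hd ?_).map C
  rw [h0, map_zero] at hb
  exact zero_dvd_iff.mp (hb ▸ hbd)

theorem dvd_of_map_dvd_map_of_forall_prime {R A : Type*} [CommRing R] [IsDomain R]
    [UniqueFactorizationMonoid R] [CommRing A] [IsDomain A] {ι : R →+* A}
    (hι : Function.Injective ι) {γ : R} (hγ : γ ≠ 0)
    (hprime : ∀ q, Prime q → q ∣ γ → ∀ a, ι q ∣ ι a → q ∣ a) {a : R} (ha : ι γ ∣ ι a) :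
    γ ∣ a := by
  induction γ using UniqueFactorizationMonoid.induction_on_prime generalizing a with
  | h₁ => exact absurd rfl hγ
  | h₂ u hu => exact hu.dvd
  | h₃ γ q hγ0 hq ih =>
    obtain ⟨a, rfl⟩ :=
      hprime q hq (dvd_mul_right q γ) a ((map_dvd ι (dvd_mul_right q γ)).trans ha)
    have hq0 : ι q ≠ 0 := (map_ne_zero_iff ι hι).mpr hq.ne_zero
    rw [map_mul, map_mul, mul_dvd_mul_iff_left hq0] at ha
    exact mul_dvd_mul_left q
      (ih hγ0 (fun p hp hpγ => hprime p hp (dvd_mul_of_dvd_right hpγ q)) ha)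

theorem MvPolynomial.finSuccEquiv_rename_succ {R : Type*} [CommSemiring R] {n : ℕ}
    (g : MvPolynomial (Fin n) R) : finSuccEquiv R n (rename Fin.succ g) = Polynomial.C g := by
  have : (finSuccEquiv R n).toAlgHom.comp (rename Fin.succ) = Polynomial.CAlgHom := by
    ext i : 1
    simp [finSuccEquiv_X_succ]
  exact AlgHom.congr_fun this g

namespace Aring

variable {k : Type} [Field k] {m : ℕ} {α : MvPolynomial (Fin m) k} {f : MvPolynomial (Fin 2) k}
  {h : MvPolynomial (Fin 2) (MvPolynomial (Fin m) k)}

variable (α f h) in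
def mk : MvPolynomial (Fin 3) (MvPolynomial (Fin m) k) →+* Aring k m α f h :=
  Ideal.Quotient.mk _

lemma mk_surjective : Function.Surjective (mk α f h) := Ideal.Quotient.mk_surjective

lemma mk_eq_zero_iff {g : MvPolynomial (Fin 3) (MvPolynomial (Fin m) k)} :
    mk α f h g = 0 ↔ HH k m α f h ∣ g :=
  Ideal.Quotient.eq_zero_iff_mem.trans Ideal.mem_span_singleton

lemma finSuccEquiv_HH :
    finSuccEquiv _ 2 (HH k m α f h) = Polynomial.C (C α) * Polynomial.X
      + Polynomial.C (-(map (algebraMap k (MvPolynomial (Fin m) k)) f + h)) := by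
  simp only [HH, map_sub, map_mul, finSuccEquiv_X_zero, finSuccEquiv_rename_succ, map_neg,
    map_add]
  rw [show finSuccEquiv _ 2 (C α) = Polynomial.C (C α) by simp [finSuccEquiv_apply]]
  ring

lemma eq_zero_of_mk_rename_succ_eq_zero (hα : α ≠ 0)
    {s : MvPolynomial (Fin 2) (MvPolynomial (Fin m) k)} (hs : mk α f h (rename Fin.succ s) = 0) :
    s = 0 := by
  by_contra hs0
  obtain ⟨c, hc⟩ := mk_eq_zero_iff.mp hs
  have hdvd : finSuccEquiv _ 2 (HH k m α f h) ∣ Polynomial.C s := by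
    rw [← finSuccEquiv_rename_succ, hc, map_mul]
    exact dvd_mul_right _ _
  have hdeg := Polynomial.natDegree_le_of_dvd hdvd (Polynomial.C_ne_zero.mpr hs0)
  rw [finSuccEquiv_HH, Polynomial.natDegree_linear (by simpa using hα),
    Polynomial.natDegree_C] at hdeg
  exact Nat.not_succ_le_zero 0 hdeg

lemma mk_rename_succ_injective (hα : α ≠ 0) :
    Function.Injective fun s : MvPolynomial (Fin 2) (MvPolynomial (Fin m) k) =>
      mk α f h (rename Fin.succ s) := fun s t hst =>
  sub_eq_zero.mp <| eq_zero_of_mk_rename_succ_eq_zero (f := f) (h := h) hα <| by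
    rw [map_sub, map_sub]; exact sub_eq_zero.mpr hst

lemma mk_comp_C_injective (hα : α ≠ 0) : Function.Injective ((mk α f h).comp C) :=
  fun r t hrt => C_injective _ _ <| mk_rename_succ_injective hα <| by
    simpa only [rename_C, RingHom.comp_apply] using hrt

lemma mk_C_mul_X_zero :
    mk α f h (C α * X 0) = mk α f h (rename Fin.succ (map (algebraMap k _) f + h)) := by
  rw [← sub_eq_zero, ← map_sub, mk_eq_zero_iff, map_add]
  exact ⟨1, by rw [HH]; ring⟩

/-- Inverting `α` makes `Y = (f + h) / α` a polynomial in `Z, T`. -/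
lemma exists_pow_mul_eq_mk_rename_succ (x : Aring k m α f h) :
    ∃ (n : ℕ) (s : MvPolynomial (Fin 2) (MvPolynomial (Fin m) k)),
      mk α f h (rename Fin.succ s) = mk α f h (C α) ^ n * x := by
  obtain ⟨g, rfl⟩ := mk_surjective x
  induction g using MvPolynomial.induction_on with
  | C r => exact ⟨0, C r, by rw [rename_C, pow_zero, one_mul]⟩
  | add g₁ g₂ ih₁ ih₂ =>
    obtain ⟨n₁, s₁, hs₁⟩ := ih₁
    obtain ⟨n₂, s₂, hs₂⟩ := ih₂
    refine ⟨n₁ + n₂, C α ^ n₂ * s₁ + C α ^ n₁ * s₂, ?_⟩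
    simp only [map_add, map_mul, map_pow, rename_C, hs₁, hs₂]
    ring
  | mul_X g i ih =>
    obtain ⟨n, s, hs⟩ := ih
    rcases Fin.eq_zero_or_eq_succ i with rfl | ⟨j, rfl⟩
    · refine ⟨n + 1, s * (map (algebraMap k _) f + h), ?_⟩
      rw [map_mul, map_mul, hs, ← mk_C_mul_X_zero, map_mul, map_mul]
      ring
    · refine ⟨n, s * X j, ?_⟩
      rw [map_mul, map_mul, hs, rename_X, map_mul]
      ring

lemma map_HH_of_dvd {q : MvPolynomial (Fin m) k} (hqα : q ∣ α) (hqh : C q ∣ h) :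
    map (Ideal.Quotient.mk (Ideal.span {q})) (HH k m α f h)
      = -rename Fin.succ (map (algebraMap k (MvPolynomial (Fin m) k ⧸ Ideal.span {q})) f) := by
  obtain ⟨h', rfl⟩ := hqh
  have hq : Ideal.Quotient.mk (Ideal.span {q}) q = 0 :=
    Ideal.Quotient.eq_zero_iff_mem.mpr (Ideal.mem_span_singleton_self q)
  have hα : Ideal.Quotient.mk (Ideal.span {q}) α = 0 :=
    Ideal.Quotient.eq_zero_iff_mem.mpr (Ideal.mem_span_singleton.mpr hqα)
  simp only [HH, map_sub, map_mul, map_C, map_X, map_rename, map_map, hq, hα, map_zero,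
    IsScalarTower.algebraMap_eq k (MvPolynomial (Fin m) k)
      (MvPolynomial (Fin m) k ⧸ Ideal.span {q}), Ideal.Quotient.algebraMap_eq]
  ring

/-- Modulo a factor `q` of `α` with `q ∣ h`, the defining relation becomes `f = 0`. -/
lemma rename_map_dvd_of_mk_C_dvd {q : MvPolynomial (Fin m) k} (hqα : q ∣ α) (hqh : C q ∣ h)
    {g : MvPolynomial (Fin 3) (MvPolynomial (Fin m) k)} (hg : mk α f h (C q) ∣ mk α f h g) :
    rename Fin.succ (map (algebraMap k (MvPolynomial (Fin m) k ⧸ Ideal.span {q})) f)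
      ∣ map (Ideal.Quotient.mk (Ideal.span {q})) g := by
  obtain ⟨c, hc⟩ := hg
  obtain ⟨c, rfl⟩ := mk_surjective c
  obtain ⟨e, he⟩ := mk_eq_zero_iff.mp (show mk α f h (g - C q * c) = 0 by
    rw [map_sub, map_mul, hc, sub_self])
  have hq : Ideal.Quotient.mk (Ideal.span {q}) q = 0 :=
    Ideal.Quotient.eq_zero_iff_mem.mpr (Ideal.mem_span_singleton_self q)
  replace he := congrArg (map (Ideal.Quotient.mk (Ideal.span {q}))) he
  rw [map_sub, map_mul, map_C, hq, C_0, zero_mul, map_mul, map_HH_of_dvd hqα hqh] at he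
  exact ⟨-map (Ideal.Quotient.mk (Ideal.span {q})) e, by linear_combination he⟩

lemma dvd_of_mk_C_dvd_mk_C (hfu : ¬IsUnit f) {q : MvPolynomial (Fin m) k} (hq : Prime q)
    (hqα : q ∣ α) (hqh : C q ∣ h) {a : MvPolynomial (Fin m) k}
    (ha : mk α f h (C q) ∣ mk α f h (C a)) : q ∣ a := by
  have : (Ideal.span {q}).IsPrime := (Ideal.span_singleton_prime hq.ne_zero).mpr hq
  have hdvd := rename_map_dvd_of_mk_C_dvd hqα hqh ha
  rw [map_C] at hdvd
  by_contra hqa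
  refine hfu (isUnit_of_rename_map_dvd_C _ (Fin.succ_injective 2) (fun h0 => hqa ?_) hdvd)
  exact Ideal.mem_span_singleton.mp (Ideal.Quotient.eq_zero_iff_mem.mp h0)

lemma mk_C_dvd_mk_rename_succ_map {p : MvPolynomial (Fin m) k} (hpα : p ∣ α) (hph : C p ∣ h) :
    mk α f h (C p) ∣ mk α f h (rename Fin.succ (map (algebraMap k _) f)) := by
  obtain ⟨α', rfl⟩ := hpα
  obtain ⟨h', rfl⟩ := hph
  refine ⟨mk _ f _ (C α' * X 0 - rename Fin.succ h'), ?_⟩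
  rw [← map_mul, ← sub_eq_zero, ← map_sub, mk_eq_zero_iff]
  exact ⟨-1, by rw [HH, map_mul, map_mul, rename_C]; ring⟩

lemma isUnit_of_mk_C_dvd (hf : f ≠ 0) {p : MvPolynomial (Fin m) k} (hp : Prime p) (hpα : p ∣ α)
    (hph : C p ∣ h) {g₁ g₂ : MvPolynomial (Fin 2) k} (hfg : f = g₁ * g₂)
    (hd : mk α f h (C p) ∣ mk α f h (rename Fin.succ (map (algebraMap k _) g₁))) : IsUnit g₂ := by
  have : (Ideal.span {p}).IsPrime := (Ideal.span_singleton_prime hp.ne_zero).mpr hp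
  have hdvd := rename_map_dvd_of_mk_C_dvd hpα hph hd
  set φ := algebraMap k (MvPolynomial (Fin m) k ⧸ Ideal.span {p})
  have hφ : map (Ideal.Quotient.mk (Ideal.span {p})) (map (algebraMap k _) g₁) = map φ g₁ := by
    rw [map_map]; rfl
  rw [map_rename, hφ, hfg, map_mul, map_mul] at hdvd
  have hg₁ : rename Fin.succ (map φ g₁) ≠ 0 := by
    rw [Ne, ← map_zero (rename Fin.succ), ← map_zero (map φ),
      (rename_injective _ (Fin.succ_injective 2)).eq_iff, (map_injective _ φ.injective).eq_iff]
    rintro rfl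
    exact hf (hfg.trans (zero_mul g₂))
  refine isUnit_of_rename_map_dvd_C φ (Fin.succ_injective 2) one_ne_zero ?_
  rwa [C_1, ← mul_dvd_mul_iff_left hg₁, mul_one]

variable [IsDomain (Aring k m α f h)]

lemma pow_dvd_of_mk_C_pow_dvd_mk_C (hα : α ≠ 0) (hfu : ¬IsUnit f)
    (hdiv : ∀ p : MvPolynomial (Fin m) k, Prime p → p ∣ α → C p ∣ h) {n : ℕ}
    {a : MvPolynomial (Fin m) k} (ha : mk α f h (C (α ^ n)) ∣ mk α f h (C a)) : α ^ n ∣ a :=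
  dvd_of_map_dvd_map_of_forall_prime (mk_comp_C_injective hα) (pow_ne_zero n hα)
    (fun q hq hqα _ => dvd_of_mk_C_dvd_mk_C hfu hq (hq.dvd_of_dvd_pow hqα)
      (hdiv q hq (hq.dvd_of_dvd_pow hqα))) ha

lemma exists_eq_mk_C_of_dvd_mk_C (hα : α ≠ 0) (hfu : ¬IsUnit f)
    (hdiv : ∀ p : MvPolynomial (Fin m) k, Prime p → p ∣ α → C p ∣ h)
    {r : MvPolynomial (Fin m) k} (hr : r ≠ 0) {u : Aring k m α f h} (hu : u ∣ mk α f h (C r)) :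
    ∃ b, u = mk α f h (C b) := by
  obtain ⟨v, huv⟩ := hu
  obtain ⟨n₁, s₁, hs₁⟩ := exists_pow_mul_eq_mk_rename_succ u
  obtain ⟨n₂, s₂, hs₂⟩ := exists_pow_mul_eq_mk_rename_succ v
  have hs : s₁ * s₂ = C (α ^ (n₁ + n₂) * r) :=
    mk_rename_succ_injective (f := f) (h := h) hα <| by
    simp only [map_mul, map_pow, rename_C, hs₁, hs₂, huv]
    ring
  obtain ⟨a, -, rfl⟩ := (dvd_C_iff_exists (mul_ne_zero (pow_ne_zero _ hα) hr)).mp (Dvd.intro _ hs)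
  rw [rename_C, ← map_pow, ← map_pow] at hs₁
  obtain ⟨b, rfl⟩ := pow_dvd_of_mk_C_pow_dvd_mk_C hα hfu hdiv (Dvd.intro u hs₁.symm)
  have hαn : mk α f h (C (α ^ n₁)) ≠ 0 :=
    (map_ne_zero_iff _ (mk_comp_C_injective hα)).mpr (pow_ne_zero n₁ hα)
  exact ⟨b, mul_left_cancel₀ hαn (by rw [← hs₁, map_mul, map_mul])⟩

lemma prime_mk_C [UniqueFactorizationMonoid (Aring k m α f h)] (hα : α ≠ 0) (hfu : ¬IsUnit f)
    (hdiv : ∀ p : MvPolynomial (Fin m) k, Prime p → p ∣ α → C p ∣ h)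
    {p : MvPolynomial (Fin m) k} (hp : Prime p) (hpα : p ∣ α) : Prime (mk α f h (C p)) := by
  rw [← UniqueFactorizationMonoid.irreducible_iff_prime]
  refine ⟨fun hunit => hp.not_isUnit (isUnit_of_dvd_one ?_), fun u v huv => ?_⟩
  · refine dvd_of_mk_C_dvd_mk_C hfu hp hpα (hdiv p hp hpα) ?_
    rw [map_one, map_one]
    exact hunit.dvd
  · obtain ⟨b₁, rfl⟩ := exists_eq_mk_C_of_dvd_mk_C hα hfu hdiv hp.ne_zero (Dvd.intro v huv.symm)
    obtain ⟨b₂, rfl⟩ :=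
      exists_eq_mk_C_of_dvd_mk_C hα hfu hdiv hp.ne_zero (Dvd.intro_left _ huv.symm)
    rw [← map_mul, ← map_mul] at huv
    exact (hp.irreducible.isUnit_or_isUnit (mk_comp_C_injective hα huv)).imp
      (IsUnit.map ((mk α f h).comp C)) (IsUnit.map ((mk α f h).comp C))

end Aring

/-- Lemma 3.6. If `A` is a UFD, then `f(Z,T)` is either irreducible
in `k[Z,T]` or a unit. -/
theorem stmt5 (k : Type) [Field k] (m : ℕ) (α : MvPolynomial (Fin m) k)
    (f : MvPolynomial (Fin 2) k) (h : MvPolynomial (Fin 2) (MvPolynomial (Fin m) k))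
    (hf : f ≠ 0)
    (hα : α ∉ Set.range (algebraMap k (MvPolynomial (Fin m) k)))
    (hdiv : ∀ p : MvPolynomial (Fin m) k, Prime p → p ∣ α → MvPolynomial.C p ∣ h)
    [IsDomain (Aring k m α f h)]
    (hufd : UniqueFactorizationMonoid (Aring k m α f h)) :
    Irreducible f ∨ IsUnit f := by
  have := hufd
  by_cases hfu : IsUnit f
  · exact Or.inr hfu
  have hα0 : α ≠ 0 := fun h0 => hα ⟨0, by rw [map_zero, h0]⟩
  have hαu : ¬IsUnit α := fun hu => by
    obtain ⟨r, -, hr⟩ := isUnit_iff_eq_C_of_isReduced.mp hu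
    exact hα ⟨r, hr.symm⟩
  obtain ⟨p, hpi, hpα⟩ := WfDvdMonoid.exists_irreducible_factor hαu hα0
  have hp : Prime p := UniqueFactorizationMonoid.irreducible_iff_prime.mp hpi
  have hph := hdiv p hp hpα
  have hpA := Aring.prime_mk_C hα0 hfu hdiv hp hpα
  refine Or.inl ⟨hfu, fun g₁ g₂ hfg => ?_⟩
  have hdvd : Aring.mk α f h (C p) ∣ Aring.mk α f h (rename Fin.succ (map (algebraMap k _) g₁))
      * Aring.mk α f h (rename Fin.succ (map (algebraMap k _) g₂)) := by
    rw [← map_mul, ← map_mul, ← map_mul, ← hfg]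
    exact Aring.mk_C_dvd_mk_rename_succ_map hpα hph
  rcases hpA.dvd_or_dvd hdvd with hd | hd
  · exact Or.inr (Aring.isUnit_of_mk_C_dvd hf hp hpα hph hfg hd)
  · exact Or.inl (Aring.isUnit_of_mk_C_dvd hf hp hpα hph (hfg.trans (mul_comm _ _)) hd)
end
end

section
/- The ring A = ℝ[X,Y,Z,T]/((1+X²)Y − (1+Z²)) is an integral domain which is not a unique factorization domain, even though f = 1+Z² is irreducible in ℝ[Z,T]. In particular, the image of 1+X² in A is neither a unit nor a prime element of A. -/
/-!
Write `S = ℝ[X, Z, T]`, `f = 1 + X²`, `g = 1 + Z²`, so that `A ≅ S[Y]/(fY - g)`. As `f` is prime in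
the UFD `S` and `f ∤ g`, the primitive linear polynomial `fY - g` is prime and `A` is a domain.

The image of `f` is not prime: it divides `(X - Z)(X + Z) = f(1 - Y)`, but at the complex points
`(i, 0, ∓i, 0)` of `A` it vanishes while one of the two factors does not.

It is irreducible: every class in `S[Y]/(fY - g)` has a representative `D` that is constant or whose
leading coefficient is prime to `f`, and the homogenised value `f ^ deg D * D(g / f) ∈ S` turns a
factorisation `f = DE` in `A` into `f ^ (deg D + deg E + 1)` in `S`. Modulo `f` that value is
`lc D * g ^ deg D`, so the factor whose value `f` divides is a constant multiple of `f`, and then the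
other factor is a unit. An irreducible element that is not prime rules out unique factorisation.
-/

noncomputable section
open MvPolynomial

/-- `A = ℝ[X,Y,Z,T]/((1+X²)Y - (1+Z²))`, with variables `X,Y,Z,T` numbered `0,1,2,3`. -/
def Aex : Type :=
  MvPolynomial (Fin 4) ℝ ⧸
    Ideal.span {((1 : MvPolynomial (Fin 4) ℝ) + (MvPolynomial.X 0) ^ 2) * MvPolynomial.X 1
      - ((1 : MvPolynomial (Fin 4) ℝ) + (MvPolynomial.X 2) ^ 2)}

instance : CommRing Aex := inferInstanceAs (CommRing (_ ⧸ _))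

/-- The image of `1 + X²` in `A`. -/
def aX : Aex := Ideal.Quotient.mk _ ((1 : MvPolynomial (Fin 4) ℝ) + (MvPolynomial.X 0) ^ 2)

end

namespace Polynomial

theorem irreducible_X_sq_add_one {R : Type*} [CommRing R] [IsDomain R] (φ : R →+* ℝ) :
    Irreducible (X ^ 2 + 1 : R[X]) := by
  refine Monic.irreducible_of_irreducible_map φ _ (by monicity!) ?_
  rw [Polynomial.map_add, Polynomial.map_pow, map_X, Polynomial.map_one]
  have hdeg : (X ^ 2 + 1 : ℝ[X]).natDegree = 2 := by compute_degree!
  refine irreducible_of_degree_le_three_of_not_isRoot (by simp [hdeg]) fun x hx => ?_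
  simp only [IsRoot, eval_add, eval_pow, eval_X, eval_one] at hx
  nlinarith [sq_nonneg x]

variable {R : Type*} [CommRing R] {f g : R}

theorem not_dvd_eval_scaleRoots (hf : Prime f) (hfg : ¬ f ∣ g) {D : R[X]}
    (hD : ¬ f ∣ D.leadingCoeff) : ¬ f ∣ (D.scaleRoots f).eval g := by
  have : (Ideal.span {f}).IsPrime := (Ideal.span_singleton_prime hf.ne_zero).mpr hf
  set π := Ideal.Quotient.mk (Ideal.span {f})
  have hπ (r : R) : π r = 0 ↔ f ∣ r := Ideal.Quotient.eq_zero_iff_dvd f r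
  have hlc : π D.leadingCoeff ≠ 0 := by rwa [Ne, hπ]
  have hmod : π ((D.scaleRoots f).eval g) = π D.leadingCoeff * π g ^ D.natDegree := by
    rw [← eval₂_hom, ← eval_map, map_scaleRoots _ _ _ hlc, (hπ f).mpr dvd_rfl, scaleRoots_zero,
      leadingCoeff_map_of_leadingCoeff_ne_zero _ hlc, natDegree_map_of_leadingCoeff_ne_zero _ hlc]
    simp
  rw [← hπ, hmod]
  exact mul_ne_zero hlc (pow_ne_zero _ (by rwa [Ne, hπ]))

variable [IsDomain R]

theorem irreducible_C_mul_X_sub_C (hf : Irreducible f) (hfg : ¬ f ∣ g) :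
    Irreducible (C f * X - C g) := by
  rw [sub_eq_add_neg, ← C_neg]
  exact irreducible_C_mul_X_add_C hf.ne_zero (hf.isRelPrime_iff_not_dvd.mpr (by rwa [dvd_neg]))

end Polynomial

theorem MvPolynomial.irreducible_one_add_X_zero_sq (n : ℕ) :
    Irreducible (1 + X 0 ^ 2 : MvPolynomial (Fin (n + 1)) ℝ) := by
  refine (MulEquiv.irreducible_iff (finSuccEquiv ℝ n).toMulEquiv).mp ?_
  convert Polynomial.irreducible_X_sq_add_one (constantCoeff (R := ℝ) (σ := Fin n)) using 1
  simp [finSuccEquiv_X_zero, add_comm]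

section

open Polynomial

namespace AdjoinRoot

variable {R : Type*} [CommRing R] {f g : R}

theorem exists_mk_eq_and_natDegree_eq_zero_or_not_dvd_leadingCoeff
    (a : AdjoinRoot (C f * X - C g)) :
    ∃ D : R[X], mk _ D = a ∧ (D.natDegree = 0 ∨ ¬ f ∣ D.leadingCoeff) := by
  obtain ⟨D, rfl⟩ := mk_surjective a
  induction hn : D.natDegree using Nat.strong_induction_on generalizing D with
  | _ n ih =>
  by_cases hD : n = 0 ∨ ¬ f ∣ D.leadingCoeff
  · exact ⟨D, rfl, hn ▸ hD⟩
  push Not at hD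
  obtain ⟨hn0, c, hc⟩ := hD
  obtain ⟨m, rfl⟩ := Nat.exists_eq_succ_of_ne_zero hn0
  -- subtracting `(f Y - g) c Y ^ m` replaces the leading term `f c Y ^ (m + 1)` by `g c Y ^ m`
  have hsub : D - (C f * X - C g) * (C c * X ^ m) = D.eraseLead + C (g * c) * X ^ m := by
    conv_lhs => rw [← D.eraseLead_add_C_mul_X_pow, hn, hc]
    simp only [C_mul, pow_succ]
    ring
  have hlt : (D - (C f * X - C g) * (C c * X ^ m)).natDegree < m + 1 := by
    rw [hsub]
    refine (natDegree_add_le_of_degree_le (by simpa [hn] using D.eraseLead_natDegree_le)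
      (natDegree_C_mul_X_pow_le _ _)).trans_lt ?_
    omega
  obtain ⟨D', hD', hred⟩ := ih _ hlt _ rfl
  refine ⟨D', ?_, hred⟩
  rw [hD', map_sub, sub_eq_self, mk_eq_zero]
  exact dvd_mul_right _ _

variable [IsDomain R]

theorem of_C_mul_X_sub_C_ne_zero (hf : f ≠ 0) : of (C f * X - C g) f ≠ 0 := by
  rw [← mk_C, Ne, mk_eq_zero]
  intro h
  have hdeg := natDegree_le_of_dvd h (C_ne_zero.mpr hf)
  have hlin : (C f * X - C g).natDegree = 1 := by compute_degree!
  rw [natDegree_C, hlin] at hdeg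
  omega

theorem eval_scaleRoots_mul_eval_scaleRoots (hf : f ≠ 0) {D E : R[X]}
    (h : mk (C f * X - C g) (D * E) = of _ f) :
    (D.scaleRoots f).eval g * (E.scaleRoots f).eval g = f ^ (D.natDegree + E.natDegree + 1) := by
  set ι := algebraMap R (FractionRing R)
  have hι : Function.Injective ι := IsFractionRing.injective R _
  have hfr : ι f * (ι g / ι f) = ι g := mul_div_cancel₀ _ ((map_ne_zero_iff _ hι).mpr hf)
  let φ := lift (f := C f * X - C g) ι (ι g / ι f) (by
    rw [eval₂_sub, eval₂_mul, eval₂_C, eval₂_X, eval₂_C, hfr, sub_self])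
  have hφ (P : R[X]) : ι ((P.scaleRoots f).eval g) = ι f ^ P.natDegree * φ (mk _ P) := by
    rw [lift_mk, ← scaleRoots_eval₂_mul, hfr, eval₂_at_apply]
  apply hι
  rw [map_mul, hφ, hφ, mul_mul_mul_comm, ← map_mul, ← map_mul, h, lift_of, map_pow, ← pow_add,
    pow_succ]

variable [UniqueFactorizationMonoid R]

theorem isDomain_C_mul_X_sub_C (hf : Irreducible f) (hfg : ¬ f ∣ g) :
    IsDomain (AdjoinRoot (C f * X - C g)) :=
  isDomain_of_prime (UniqueFactorizationMonoid.irreducible_iff_prime.mp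
    (irreducible_C_mul_X_sub_C hf hfg))

theorem irreducible_of_C_mul_X_sub_C (hf : Irreducible f) (hfg : ¬ f ∣ g)
    (hu : ¬ IsUnit (of (C f * X - C g) f)) : Irreducible (of (C f * X - C g) f) := by
  have := isDomain_C_mul_X_sub_C hf hfg
  have hp : Prime f := UniqueFactorizationMonoid.irreducible_iff_prime.mp hf
  have isUnit_cofactor (D : R[X]) (e : AdjoinRoot (C f * X - C g))
      (hD : D.natDegree = 0 ∨ ¬ f ∣ D.leadingCoeff) (hdvd : f ∣ (D.scaleRoots f).eval g)
      (hDe : mk _ D * e = of _ f) : IsUnit e := by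
    obtain ⟨c, rfl⟩ := natDegree_eq_zero.mp
      (hD.resolve_right fun h => not_dvd_eval_scaleRoots hp hfg h hdvd)
    obtain ⟨c, rfl⟩ : f ∣ c := by simpa using hdvd
    refine IsUnit.of_mul_eq_one (of _ c) (mul_left_cancel₀ (of_C_mul_X_sub_C_ne_zero hf.ne_zero) ?_)
    calc of _ f * (e * of _ c) = mk _ (C (f * c)) * e := by rw [mk_C, map_mul]; ring
      _ = of _ f * 1 := by rw [hDe, mul_one]
  refine ⟨hu, fun d e hde => ?_⟩
  obtain ⟨D, rfl, hD⟩ := exists_mk_eq_and_natDegree_eq_zero_or_not_dvd_leadingCoeff d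
  obtain ⟨E, rfl, hE⟩ := exists_mk_eq_and_natDegree_eq_zero_or_not_dvd_leadingCoeff e
  have hDE := eval_scaleRoots_mul_eval_scaleRoots hf.ne_zero (g := g) (by rw [map_mul, hde])
  rcases hp.dvd_or_dvd (hDE ▸ dvd_pow_self f (Nat.succ_ne_zero _)) with h | h
  · exact Or.inr (isUnit_cofactor D _ hD h hde.symm)
  · exact Or.inl (isUnit_cofactor E _ hE h ((mul_comm _ _).trans hde.symm))

end AdjoinRoot

end

namespace Aex

open MvPolynomial

noncomputable def mk : MvPolynomial (Fin 4) ℝ →+* Aex := Ideal.Quotient.mk _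

lemma aX_eq_mk : aX = mk (1 + X 0 ^ 2) := rfl

-- `Y = X 1` becomes the polynomial variable over `ℝ[X, Z, T]`.
noncomputable def toPolynomial :
    MvPolynomial (Fin 4) ℝ ≃ₐ[ℝ] Polynomial (MvPolynomial (Fin 3) ℝ) :=
  (renameEquiv ℝ (finSuccEquiv' 1)).trans (optionEquivLeft ℝ (Fin 3))

lemma toPolynomial_X_zero : toPolynomial (X 0) = Polynomial.C (X 0) := by
  simp [toPolynomial, show finSuccEquiv' (1 : Fin 4) 0 = some 0 from rfl]

lemma toPolynomial_X_one : toPolynomial (X 1) = Polynomial.X := by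
  simp [toPolynomial]

lemma toPolynomial_X_two : toPolynomial (X 2) = Polynomial.C (X 1) := by
  simp [toPolynomial, show finSuccEquiv' (1 : Fin 4) 2 = some 1 from rfl]

noncomputable def equivAdjoinRoot :
    Aex ≃+* AdjoinRoot (Polynomial.C (1 + X 0 ^ 2) * Polynomial.X - Polynomial.C (1 + X 1 ^ 2) :
      Polynomial (MvPolynomial (Fin 3) ℝ)) :=
  Ideal.quotientEquiv _ _ toPolynomial.toRingEquiv <| by
    rw [Ideal.map_span, Set.image_singleton]
    congr
    simp [toPolynomial_X_zero, toPolynomial_X_one, toPolynomial_X_two]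

lemma equivAdjoinRoot_aX : equivAdjoinRoot aX = AdjoinRoot.of _ (1 + X 0 ^ 2) := by
  rw [← AdjoinRoot.mk_C]
  exact (Ideal.quotientEquiv_mk _ _ _ _ _).trans
    (congrArg (AdjoinRoot.mk _) (by simp [toPolynomial_X_zero]))

lemma one_add_X_zero_sq_not_dvd : ¬ (1 + X 0 ^ 2 : MvPolynomial (Fin 3) ℝ) ∣ 1 + X 1 ^ 2 :=
  fun h => by simpa using map_dvd (aeval ![Complex.I, 0, 0]) h

noncomputable def evalAt (v : Fin 4 → ℂ) (hv : (1 + v 0 ^ 2) * v 1 = 1 + v 2 ^ 2) : Aex →+* ℂ :=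
  Ideal.Quotient.lift _ (aeval v).toRingHom fun a ha => by
    obtain ⟨b, rfl⟩ := Ideal.mem_span_singleton'.mp ha
    simp [hv]

@[simp]
lemma evalAt_mk (v : Fin 4 → ℂ) (hv : (1 + v 0 ^ 2) * v 1 = 1 + v 2 ^ 2)
    (p : MvPolynomial (Fin 4) ℝ) : evalAt v hv (mk p) = aeval v p :=
  rfl

lemma aX_not_isUnit : ¬ IsUnit aX := fun h => by
  simpa [aX_eq_mk] using h.map (evalAt ![Complex.I, 0, Complex.I, 0] (by simp))

-- `(X - Z)(X + Z) = (1 + X²) - (1 + Z²) = (1 + X²)(1 - Y)` in `A`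
lemma aX_dvd_mul : aX ∣ mk (X 0 - X 2) * mk (X 0 + X 2) := by
  refine ⟨mk (1 - X 1), ?_⟩
  rw [aX_eq_mk, ← map_mul, ← map_mul, ← sub_eq_zero, ← map_sub]
  exact (Ideal.Quotient.eq_zero_iff_dvd _ _).mpr ⟨1, by ring⟩

lemma aX_not_prime : ¬ Prime aX := by
  intro hp
  rcases hp.dvd_or_dvd aX_dvd_mul with h | h
  · simpa [aX_eq_mk, ← two_mul] using map_dvd (evalAt ![Complex.I, 0, -Complex.I, 0] (by simp)) h
  · simpa [aX_eq_mk, ← two_mul] using map_dvd (evalAt ![Complex.I, 0, Complex.I, 0] (by simp)) h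

lemma isDomain : IsDomain Aex :=
  have := AdjoinRoot.isDomain_C_mul_X_sub_C (irreducible_one_add_X_zero_sq 2)
    one_add_X_zero_sq_not_dvd
  equivAdjoinRoot.toMulEquiv.isDomain _

lemma irreducible_aX : Irreducible aX := by
  have hu : ¬ IsUnit (equivAdjoinRoot aX) :=
    (MulEquiv.isUnit_map equivAdjoinRoot.toMulEquiv).not.mpr aX_not_isUnit
  refine (MulEquiv.irreducible_iff equivAdjoinRoot.toMulEquiv).mp ?_
  change Irreducible (equivAdjoinRoot aX)
  rw [equivAdjoinRoot_aX] at hu ⊢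
  exact AdjoinRoot.irreducible_of_C_mul_X_sub_C (irreducible_one_add_X_zero_sq 2)
    one_add_X_zero_sq_not_dvd hu

end Aex

/-- `A = ℝ[X,Y,Z,T]/((1+X²)Y - (1+Z²))` is an integral domain which is
not a UFD, although `f = 1 + Z²` is irreducible in `ℝ[Z,T]`; the image of `1+X²` in `A`
is neither a unit nor a prime element. -/
theorem stmt6 :
    Irreducible ((1 : MvPolynomial (Fin 2) ℝ) + (MvPolynomial.X 0) ^ 2) ∧
    ∃ _ : IsDomain Aex,
      ¬ IsUnit aX ∧ ¬ Prime aX ∧ ¬ UniqueFactorizationMonoid Aex := by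
  have := Aex.isDomain
  refine ⟨MvPolynomial.irreducible_one_add_X_zero_sq 1, this, Aex.aX_not_isUnit,
    Aex.aX_not_prime, fun _ => ?_⟩
  exact Aex.aX_not_prime (UniqueFactorizationMonoid.irreducible_iff_prime.mp Aex.irreducible_aX)
end

section
/- Let f = a_0(Z) + a_1(Z)T ∈ k[Z,T] with a_0, a_1 ∈ k[Z], f irreducible in k[Z,T], and suppose the unit group of k[Z,T]/(f) equals k^*. Then f is a coordinate of k[Z,T], i.e. k[Z,T] = k[f]^[1]. In particular, if k[Z,T]/(f) ≅ k^[1], then k[Z,T] = k[f]^[1]. -/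
/-!
Write `f = a₀(Z) + a₁(Z) T`. If `a₁ ≠ 0`, irreducibility of `f` forces `gcd(a₀, a₁) = 1`, so `a₁`
is invertible modulo `f`; a unit of `k[Z,T]/(f)` is a constant, so `f ∣ a₁ - c`, and comparing
`T`-degrees gives `a₁ = c ∈ kˣ`. Then `Z ↦ f`, `T ↦ Z` is an automorphism. If `a₁ = 0`, then
`a₀` is irreducible, so either `a₀ ∣ Z` or `Z` is a unit modulo `f`, hence congruent to a
constant; either way `a₀ ∣ Z - c`, so `a₀` is linear. For the second claim, `k[Z,T]/(f) ≅ k[X]`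
makes `(f)` prime, with `f ≠ 0` since `k[Z,T]` has Krull dimension `2`, and the units of `k[X]`
are the constants.
-/

noncomputable section
open MvPolynomial

def HasConstantUnits (k A : Type*) [CommSemiring k] [Semiring A] [Algebra k A] : Prop :=
  ∀ u : A, IsUnit u → ∃ c : k, u = algebraMap k A c

theorem HasConstantUnits.exists_dvd_sub_algebraMap {k R : Type*} [CommSemiring k] [CommRing R]
    [Algebra k R] {f g : R} (hunits : HasConstantUnits k (R ⧸ Ideal.span {f}))
    (hfg : IsCoprime f g) : ∃ c : k, f ∣ g - algebraMap k R c := by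
  obtain ⟨u, v, huv⟩ := hfg
  have hg : IsUnit (Ideal.Quotient.mk (Ideal.span {f}) g) := by
    refine .of_mul_eq_one (Ideal.Quotient.mk _ v) ?_
    rw [← map_mul, ← map_one (Ideal.Quotient.mk _), Ideal.Quotient.eq, Ideal.mem_span_singleton]
    exact ⟨-u, by linear_combination huv⟩
  obtain ⟨c, hc⟩ := hunits _ hg
  refine ⟨c, Ideal.mem_span_singleton.mp (Ideal.Quotient.eq.mp ?_)⟩
  rw [hc, Ideal.Quotient.mk_algebraMap]

theorem HasConstantUnits.of_algEquiv_polynomial {k A : Type*} [CommRing k] [IsDomain k]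
    [Semiring A] [Algebra k A] (θ : A ≃ₐ[k] Polynomial k) : HasConstantUnits k A := by
  intro u hu
  obtain ⟨c, -, hc⟩ := Polynomial.isUnit_iff.mp (hu.map θ)
  exact ⟨c, θ.injective (by rw [AlgEquiv.commutes, ← hc, Polynomial.algebraMap_eq])⟩

theorem Polynomial.eq_zero_of_C_mul_X_add_C_dvd_C {R : Type*} [CommRing R] [IsDomain R]
    {a b q : R} (ha : a ≠ 0)
    (hdvd : Polynomial.C a * Polynomial.X + Polynomial.C b ∣ Polynomial.C q) : q = 0 := by
  by_contra hq
  have hdeg := Polynomial.natDegree_le_of_dvd hdvd (Polynomial.C_ne_zero.mpr hq)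
  rw [Polynomial.natDegree_linear ha, Polynomial.natDegree_C] at hdeg
  omega

namespace LinearInT

variable {k : Type*} [Field k]

-- `Z = X 0` and `T = X 1`; `toPolyT` reads `k[Z,T]` as `k[Z][T]`.
variable (k) in
def ofZ : Polynomial k →ₐ[k] MvPolynomial (Fin 2) k := Polynomial.aeval (X 0)

variable (k) in
def evalTZero : MvPolynomial (Fin 2) k →ₐ[k] Polynomial k := aeval ![Polynomial.X, 0]

variable (k) in
def toPolyT : MvPolynomial (Fin 2) k →ₐ[k] Polynomial (Polynomial k) :=
  aeval ![Polynomial.C Polynomial.X, Polynomial.X]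

@[simp]
theorem evalTZero_ofZ (p : Polynomial k) : evalTZero k (ofZ k p) = p := by
  rw [ofZ, ← Polynomial.aeval_algHom_apply]
  simp [evalTZero]

@[simp]
theorem toPolyT_ofZ (p : Polynomial k) : toPolyT k (ofZ k p) = Polynomial.C p := by
  rw [ofZ, ← Polynomial.aeval_algHom_apply]
  simpa [toPolyT, Polynomial.CAlgHom] using
    Polynomial.aeval_algHom_apply (Polynomial.CAlgHom (R := k) (A := Polynomial k)) Polynomial.X p

@[simp]
theorem toPolyT_X_one : toPolyT k (X 1) = Polynomial.X := by simp [toPolyT]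

instance : IsLocalHom (ofZ k) := isLocalHom_of_leftInverse (evalTZero k) evalTZero_ofZ

theorem eq_zero_of_dvd_ofZ {a0 a1 q : Polynomial k} (ha1 : a1 ≠ 0)
    (hdvd : ofZ k a0 + ofZ k a1 * X 1 ∣ ofZ k q) : q = 0 := by
  have hdvd' := map_dvd (toPolyT k) hdvd
  rw [map_add, map_mul, toPolyT_ofZ, toPolyT_ofZ, toPolyT_ofZ, toPolyT_X_one, add_comm] at hdvd'
  exact Polynomial.eq_zero_of_C_mul_X_add_C_dvd_C ha1 hdvd'

theorem isCoprime_of_irreducible {a0 a1 : Polynomial k} (ha1 : a1 ≠ 0)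
    (hirr : Irreducible (ofZ k a0 + ofZ k a1 * X 1)) : IsCoprime a0 a1 := by
  refine EuclideanDomain.isCoprime_of_dvd (fun h => ha1 h.2) ?_
  rintro d hd - ⟨b0, rfl⟩ ⟨b1, rfl⟩
  have hb1 : b1 ≠ 0 := right_ne_zero_of_mul ha1
  have hfac :
      ofZ k (d * b0) + ofZ k (d * b1) * X 1 = ofZ k d * (ofZ k b0 + ofZ k b1 * X 1) := by
    simp only [map_mul]; ring
  rcases hirr.isUnit_or_isUnit hfac with hd' | hg
  · exact hd ((isUnit_map_iff (ofZ k) d).mp hd')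
  · exact one_ne_zero (eq_zero_of_dvd_ofZ hb1 (by simpa using hg.dvd))

theorem exists_algEquiv_X_zero_eq (p : Polynomial k) {c : k} (hc : c ≠ 0) :
    ∃ e : MvPolynomial (Fin 2) k ≃ₐ[k] MvPolynomial (Fin 2) k, e (X 0) = ofZ k p + C c * X 1 := by
  let F : MvPolynomial (Fin 2) k →ₐ[k] MvPolynomial (Fin 2) k := aeval ![ofZ k p + C c * X 1, X 0]
  let G : MvPolynomial (Fin 2) k →ₐ[k] MvPolynomial (Fin 2) k :=
    aeval ![X 1, C c⁻¹ * (X 0 - Polynomial.aeval (X 1) p)]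
  refine ⟨.ofAlgHom F G ?_ ?_, by simp [F]⟩ <;> apply MvPolynomial.algHom_ext <;> intro i <;>
    fin_cases i <;>
    simp [F, G, ofZ, ← Polynomial.aeval_algHom_apply, mul_add, mul_sub, ← mul_assoc, ← C_mul, hc]

theorem exists_algEquiv_X_zero_eq_ofZ {a : Polynomial k} (ha : a.natDegree = 1) :
    ∃ e : MvPolynomial (Fin 2) k ≃ₐ[k] MvPolynomial (Fin 2) k, e (X 0) = ofZ k a := by
  have hlead : a.coeff 1 ≠ 0 := by
    have ha0 : a ≠ 0 := by rintro rfl; simp at ha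
    simpa [Polynomial.leadingCoeff, ha] using Polynomial.leadingCoeff_ne_zero.mpr ha0
  obtain ⟨e, he⟩ := exists_algEquiv_X_zero_eq (Polynomial.C (a.coeff 0)) hlead
  -- `b₁ Z + b₀` is the image of `b₀ + b₁ T` under `Z ↔ T`.
  refine ⟨e.trans (renameEquiv k (Equiv.swap 0 1)), ?_⟩
  rw [AlgEquiv.trans_apply, he]
  conv_rhs => rw [Polynomial.eq_X_add_C_of_natDegree_le_one ha.le]
  simp [ofZ, add_comm]

theorem natDegree_eq_one_of_hasConstantUnits {a : Polynomial k} (ha : Irreducible a)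
    (hunits : HasConstantUnits k (MvPolynomial (Fin 2) k ⧸ Ideal.span {ofZ k a})) :
    a.natDegree = 1 := by
  obtain ⟨c, hc⟩ : ∃ c : k, a ∣ Polynomial.X - Polynomial.C c := by
    rcases dvd_or_isCoprime a Polynomial.X ha with hX | hX
    · exact ⟨0, by simpa using hX⟩
    · have h1 : IsCoprime (ofZ k a) (ofZ k Polynomial.X) := hX.map (ofZ k).toRingHom
      obtain ⟨c, hc⟩ := hunits.exists_dvd_sub_algebraMap h1
      have h2 := map_dvd (evalTZero k) hc
      rw [map_sub, evalTZero_ofZ, evalTZero_ofZ, AlgHom.commutes, Polynomial.algebraMap_eq] at h2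
      exact ⟨c, h2⟩
  have hle := Polynomial.natDegree_le_of_dvd hc (Polynomial.X_sub_C_ne_zero c)
  rw [Polynomial.natDegree_X_sub_C] at hle
  have hpos := Polynomial.natDegree_pos_iff_degree_pos.mpr (Polynomial.degree_pos_of_irreducible ha)
  omega

theorem exists_eq_C_of_hasConstantUnits {a0 a1 : Polynomial k} (ha1 : a1 ≠ 0)
    (hirr : Irreducible (ofZ k a0 + ofZ k a1 * X 1))
    (hunits : HasConstantUnits k
      (MvPolynomial (Fin 2) k ⧸ Ideal.span {ofZ k a0 + ofZ k a1 * X 1})) :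
    ∃ c : k, a1 = Polynomial.C c := by
  obtain ⟨u, v, huv⟩ := isCoprime_of_irreducible ha1 hirr
  have hco : IsCoprime (ofZ k a0 + ofZ k a1 * X 1) (ofZ k a1) := by
    refine ⟨ofZ k u, ofZ k v - ofZ k u * X 1, ?_⟩
    have huv' := congrArg (ofZ k) huv
    simp only [map_add, map_mul, map_one] at huv'
    linear_combination huv'
  obtain ⟨c, hc⟩ := hunits.exists_dvd_sub_algebraMap hco
  rw [← (ofZ k).commutes, ← map_sub] at hc
  exact ⟨c, by rw [← Polynomial.algebraMap_eq, ← sub_eq_zero, eq_zero_of_dvd_ofZ ha1 hc]⟩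

theorem exists_algEquiv_X_zero_eq_of_hasConstantUnits {a0 a1 : Polynomial k}
    (hirr : Irreducible (ofZ k a0 + ofZ k a1 * X 1))
    (hunits : HasConstantUnits k
      (MvPolynomial (Fin 2) k ⧸ Ideal.span {ofZ k a0 + ofZ k a1 * X 1})) :
    ∃ e : MvPolynomial (Fin 2) k ≃ₐ[k] MvPolynomial (Fin 2) k,
      e (X 0) = ofZ k a0 + ofZ k a1 * X 1 := by
  by_cases ha1 : a1 = 0
  · subst ha1
    rw [map_zero, zero_mul, add_zero] at hirr hunits ⊢
    exact exists_algEquiv_X_zero_eq_ofZ (natDegree_eq_one_of_hasConstantUnits hirr.of_map hunits)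
  · obtain ⟨c, rfl⟩ := exists_eq_C_of_hasConstantUnits ha1 hirr hunits
    have hc : c ≠ 0 := by rintro rfl; simp at ha1
    simpa [ofZ] using exists_algEquiv_X_zero_eq a0 hc

theorem prime_of_quotient_algEquiv_polynomial {f : MvPolynomial (Fin 2) k}
    (θ : (MvPolynomial (Fin 2) k ⧸ Ideal.span {f}) ≃ₐ[k] Polynomial k) : Prime f := by
  have hf : f ≠ 0 := by
    rintro rfl
    rw [Ideal.span_singleton_eq_bot.mpr rfl] at θ
    have hdim := ringKrullDim_eq_of_ringEquiv ((RingEquiv.quotientBot _).symm.trans θ.toRingEquiv)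
    simp at hdim
  have hdom : IsDomain (MvPolynomial (Fin 2) k ⧸ Ideal.span {f}) :=
    θ.toMulEquiv.isDomain (Polynomial k)
  exact (Ideal.span_singleton_prime hf).mp ((Ideal.Quotient.isDomain_iff_prime _).mp hdom)

end LinearInT

open LinearInT

/-- Lemma 5.21. Let `f = a₀(Z) + a₁(Z)·T ∈ k[Z,T]` (with `Z = X 0`,
`T = X 1`). If `f` is irreducible and the unit group of `k[Z,T]/(f)` equals `k^*`, then
`f` is a coordinate of `k[Z,T]`. In particular, if `k[Z,T]/(f) ≅ k^[1]`, then `f` is a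
coordinate of `k[Z,T]`. -/
theorem stmt11 (k : Type) [Field k] (a0 a1 : Polynomial k)
    (f : MvPolynomial (Fin 2) k)
    (hf : f = Polynomial.aeval (MvPolynomial.X 0) a0
        + Polynomial.aeval (MvPolynomial.X 0) a1 * MvPolynomial.X 1) :
    ((Irreducible f →
        (∀ u : MvPolynomial (Fin 2) k ⧸ Ideal.span {f},
            IsUnit u → ∃ c : k, u = algebraMap k _ c) →
        ∃ e : MvPolynomial (Fin 2) k ≃ₐ[k] MvPolynomial (Fin 2) k,
          e (MvPolynomial.X 0) = f)) ∧
    (Nonempty ((MvPolynomial (Fin 2) k ⧸ Ideal.span {f}) ≃ₐ[k] Polynomial k) →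
      ∃ e : MvPolynomial (Fin 2) k ≃ₐ[k] MvPolynomial (Fin 2) k,
        e (MvPolynomial.X 0) = f) := by
  subst hf
  refine ⟨exists_algEquiv_X_zero_eq_of_hasConstantUnits, ?_⟩
  rintro ⟨θ⟩
  exact exists_algEquiv_X_zero_eq_of_hasConstantUnits
    (prime_of_quotient_algEquiv_polynomial θ).irreducible
    (HasConstantUnits.of_algEquiv_polynomial θ)
end
end
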